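/- arXiv:1605.01879 — 5 statements merged into one kernel-verified Lean document; each statement's English description precedes it below -/
import Mathlib

section
/- Let g : [0,∞) → [0,∞) be a non-increasing, right-continuous function, and let α > 1 and B > 1 be constants such that t·g(t+s) ≤ B·(g(s))^α for all t, s > 0. Then g(s) = 0 for every s ≥ s_∞, where s_∞ = 2B·g(0)^{α−1}/(1 − 2^{1−α}). -/
open Set Filter

/-- De Giorgi-type iteration lemma (Eyssidieux–Guedj–Zeriahi):
if `g : [0,∞) → [0,∞)` is non-increasing, right-continuous and satisfies
`t·g(t+s) ≤ B·g(s)^α` for all `t, s > 0` with `α, B > 1`, then `g` vanishes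
from `s_∞ = 2·B·g(0)^(α-1)/(1 - 2^(1-α))` on. -/
theorem deGiorgi_iteration_lemma
    (g : ℝ → ℝ) (α B : ℝ)
    (hg_nonneg : ∀ t, 0 ≤ t → 0 ≤ g t)
    (hg_mono : ∀ s t, 0 ≤ s → s ≤ t → g t ≤ g s)
    (hg_rc : ∀ s, 0 ≤ s → Tendsto g (nhdsWithin s (Set.Ioi s)) (nhds (g s)))
    (hα : 1 < α) (hB : 1 < B)
    (hineq : ∀ t s, 0 < t → 0 < s → t * g (t + s) ≤ B * (g s) ^ α)
    (s_inf : ℝ)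
    (hs_inf : s_inf = 2 * B * (g 0) ^ (α - 1) / (1 - (2 : ℝ) ^ (1 - α))) :
    ∀ s, s_inf ≤ s → g s = 0 := by
  have h2 : (0:ℝ) ≤ 2 := by norm_num
  set r : ℝ := (2:ℝ) ^ (1 - α) with hr
  have hr0 : 0 < r := Real.rpow_pos_of_pos (by norm_num) _
  have hr1 : r < 1 := Real.rpow_lt_one_of_one_lt_of_neg (by norm_num) (by linarith)
  have hden : 0 < 1 - r := by linarith
  have hα1 : (0:ℝ) < α - 1 := by linarith
  have hg00 : 0 ≤ g 0 := hg_nonneg 0 le_rfl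
  have hs_inf_nonneg : 0 ≤ s_inf := by
    rw [hs_inf]
    apply div_nonneg _ hden.le
    have := Real.rpow_nonneg hg00 (α - 1)
    nlinarith
  have hpow : ∀ j : ℕ, ((2:ℝ)⁻¹ ^ j) ^ (α - 1) = r ^ j := by
    intro j
    have l1 : ((2:ℝ)⁻¹ ^ j : ℝ) = (2:ℝ) ^ (-(j:ℝ)) := by
      rw [inv_pow, Real.rpow_neg h2, Real.rpow_natCast]
    rw [l1, ← Real.rpow_natCast r j, hr, ← Real.rpow_mul h2, ← Real.rpow_mul h2]
    congr 1
    ring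
  have key : ∀ s, s_inf < s → g s = 0 := by
    intro s hs
    have hε0 : 0 < s - s_inf := by linarith
    set ε : ℝ := s - s_inf with hε
    have hgε0 : 0 ≤ g ε := hg_nonneg ε hε0.le
    set a : ℕ → ℝ := fun j => Nat.rec ε (fun _ x => x + 2*B*(g x)^(α-1)) j with ha
    have hastep : ∀ j, a (j+1) = a j + 2*B*(g (a j))^(α-1) := fun j => rfl
    have apos : ∀ j, 0 < a j := by
      intro j
      induction j with
      | zero => exact hε0
      | succ j ih =>
        rw [hastep]
        have : 0 ≤ 2*B*(g (a j))^(α-1) := by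
          have := Real.rpow_nonneg (hg_nonneg (a j) ih.le) (α-1)
          nlinarith
        linarith
    have hdecay : ∀ j, g (a j) ≤ g ε * (2:ℝ)⁻¹ ^ j := by
      intro j
      induction j with
      | zero => simp only [pow_zero, mul_one]; exact le_rfl
      | succ j ih =>
        rcases le_or_gt (g (a j)) 0 with h0 | hpos
        · have hgaj : g (a j) = 0 := le_antisymm h0 (hg_nonneg _ (apos j).le)
          have : a (j+1) = a j := by
            rw [hastep, hgaj, Real.zero_rpow (ne_of_gt hα1)]
            ring
          rw [this, hgaj]
          positivity
        · set t : ℝ := 2*B*(g (a j))^(α-1) with ht_def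
          have ht : 0 < t := by
            have := Real.rpow_pos_of_pos hpos (α-1)
            rw [ht_def]; nlinarith
          have hin := hineq t (a j) ht (apos j)
          have hgstep : g (a (j+1)) ≤ g (a j) / 2 := by
            have h1 : g (a (j+1)) = g (t + a j) := by
              rw [hastep, add_comm]
            have h2' : g (t + a j) ≤ B * (g (a j)) ^ α / t :=
              (le_div_iff₀ ht).mpr (by linarith [hin])
            have hcalc : B * (g (a j)) ^ α / t = g (a j) / 2 := by
              rw [ht_def, show α = (α-1) + 1 by ring, Real.rpow_add hpos, Real.rpow_one]
              have hne : (g (a j)) ^ (α-1) ≠ 0 := ne_of_gt (Real.rpow_pos_of_pos hpos _)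
              have hBne : B ≠ 0 := by linarith
              field_simp
              ring
            rw [h1]; rw [hcalc] at h2'; exact h2'
          calc g (a (j+1)) ≤ g (a j) / 2 := hgstep
            _ ≤ (g ε * (2:ℝ)⁻¹ ^ j) / 2 := by linarith
            _ = g ε * (2:ℝ)⁻¹ ^ (j+1) := by rw [pow_succ]; ring
    set C : ℝ := 2*B*(g ε)^(α-1) with hC
    have hC0 : 0 ≤ C := by
      have := Real.rpow_nonneg hgε0 (α-1)
      rw [hC]; nlinarith
    have hinc : ∀ j, 2*B*(g (a j))^(α-1) ≤ C * r ^ j := by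
      intro j
      have h1 : (g (a j))^(α-1) ≤ (g ε * (2:ℝ)⁻¹ ^ j)^(α-1) :=
        Real.rpow_le_rpow (hg_nonneg _ (apos j).le) (hdecay j) hα1.le
      have h2' : (g ε * (2:ℝ)⁻¹ ^ j)^(α-1) = (g ε)^(α-1) * r ^ j := by
        rw [Real.mul_rpow hgε0 (by positivity), hpow]
      rw [h2'] at h1
      rw [hC]
      nlinarith [pow_nonneg hr0.le j, Real.rpow_nonneg hgε0 (α-1)]
    have habound : ∀ j, a j ≤ ε + C * (1 - r ^ j) / (1 - r) := by
      intro j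
      induction j with
      | zero => simp [show a 0 = ε from rfl]
      | succ j ih =>
        have := hinc j
        rw [hastep]
        have heq : ε + C * (1 - r ^ j) / (1 - r) + C * r ^ j
            = ε + C * (1 - r ^ (j+1)) / (1 - r) := by
          rw [pow_succ]
          field_simp
          ring
        linarith
    have halt : ∀ j, a j ≤ s := by
      intro j
      have h1 : a j ≤ ε + C / (1 - r) := by
        have h2' : C * (1 - r ^ j) / (1 - r) ≤ C / (1 - r) := by
          gcongr
          nlinarith [pow_nonneg hr0.le j]
        linarith [habound j]
      have h3 : C / (1 - r) ≤ s_inf := by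
        rw [hs_inf, hC]
        gcongr
        have hge : g ε ≤ g 0 := hg_mono 0 ε le_rfl hε0.le
        have := Real.rpow_le_rpow hgε0 hge hα1.le
        nlinarith
      have : ε + s_inf = s := by rw [hε]; ring
      linarith
    have hgs : ∀ j : ℕ, g s ≤ g ε * (2:ℝ)⁻¹ ^ j := fun j =>
      le_trans (hg_mono (a j) s (apos j).le (halt j)) (hdecay j)
    have htend : Tendsto (fun j : ℕ => g ε * (2:ℝ)⁻¹ ^ j) atTop (nhds 0) := by
      have := (tendsto_pow_atTop_nhds_zero_of_lt_one (by norm_num : (0:ℝ) ≤ 2⁻¹)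
        (by norm_num : (2:ℝ)⁻¹ < 1)).const_mul (g ε)
      simpa using this
    have hle : g s ≤ 0 := ge_of_tendsto' htend hgs
    exact le_antisymm hle (hg_nonneg s (le_trans hs_inf_nonneg hs.le))
  intro s hs
  rcases eq_or_lt_of_le hs with heq | hlt
  · subst heq
    have h0 : ∀ᶠ t in nhdsWithin s_inf (Set.Ioi s_inf), g t = 0 := by
      filter_upwards [self_mem_nhdsWithin] with t ht
      exact key t ht
    have h1 := hg_rc s_inf hs_inf_nonneg
    have h2' : Tendsto g (nhdsWithin s_inf (Set.Ioi s_inf)) (nhds 0) :=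
      Tendsto.congr' (h0.mono fun t ht => ht.symm) tendsto_const_nhds
    exact tendsto_nhds_unique h1 h2'
  · exact key s hlt
end

section
/- Let Ω be a bounded domain in ℂⁿ and T > 0. Let g : Ω × (0,T) → Mat_{n×n}(ℂ) be continuous with g(z,t) a positive definite Hermitian matrix for every (z,t). Suppose H ∈ C^∞(Ω × (0,T)) ∩ C(Ω̄ × [0,T)) is real-valued, the matrix g(z,t) + (H_{αβ̄}(z,t)) is positive definite for every (z,t) ∈ Ω × (0,T), and ∂H/∂t (z,t) ≤ log det(g(z,t) + (H_{αβ̄}(z,t))) − log det(g(z,t)) for all (z,t) ∈ Ω × (0,T), where (H_{αβ̄}(z,t)) is the complex Hessian of H(·,t) at z. Then sup_{Ω̄ × [0,T)} H = sup_{∂_P(Ω×(0,T))} H. -/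
open Set Metric Complex ComplexOrder

/-- The complex Hessian `(u_{αβ̄}(z))` of a real-valued function `u` on `ℂⁿ`,
expressed via the second real Fréchet derivative `H` of `u` at `z`:
`u_{αβ̄} = (1/4)[H(e_α,e_β) + H(ie_α,ie_β)] + (i/4)[H(ie_α,e_β) − H(e_α,ie_β)]`. -/
noncomputable def complexHessian {n : ℕ} (u : EuclideanSpace ℂ (Fin n) → ℝ)
    (z : EuclideanSpace ℂ (Fin n)) : Matrix (Fin n) (Fin n) ℂ :=
  fun α β =>
    (((iteratedFDeriv ℝ 2 u z ![EuclideanSpace.single α 1, EuclideanSpace.single β 1]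
        + iteratedFDeriv ℝ 2 u z ![Complex.I • EuclideanSpace.single α 1,
            Complex.I • EuclideanSpace.single β 1] : ℝ) : ℂ)) / 4
    + Complex.I *
      (((iteratedFDeriv ℝ 2 u z ![Complex.I • EuclideanSpace.single α 1,
          EuclideanSpace.single β 1]
        - iteratedFDeriv ℝ 2 u z ![EuclideanSpace.single α 1,
            Complex.I • EuclideanSpace.single β 1] : ℝ) : ℂ)) / 4

/-- The parabolic boundary `∂_P(Ω×(0,T)) = (∂Ω×(0,T)) ∪ (Ω̄×{0})`. -/
def parabolicBoundary {n : ℕ} (Ω : Set (EuclideanSpace ℂ (Fin n))) (T : ℝ) :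
    Set (EuclideanSpace ℂ (Fin n) × ℝ) :=
  (frontier Ω ×ˢ Set.Ioo 0 T) ∪ (closure Ω ×ˢ ({0} : Set ℝ))



section auxPMPMA
open Filter Topology Matrix ComplexOrder

open scoped MatrixOrder in
private lemma det_re_le_det_re_add {m : ℕ} {M P : Matrix (Fin m) (Fin m) ℂ}
    (hM : M.PosDef) (hP : P.PosSemidef) : M.det.re ≤ (M + P).det.re := by
  classical
  set S := CFC.sqrt M with hSdef
  have hS : S.PosSemidef := Matrix.nonneg_iff_posSemidef.mp (CFC.sqrt_nonneg M)
  have hSS : S * S = M := CFC.sqrt_mul_sqrt_self M (Matrix.nonneg_iff_posSemidef.mpr hM.posSemidef)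
  have hdetM : (0:ℂ) < M.det := hM.det_pos
  have hdetS : S.det ≠ 0 := by
    intro h
    have : M.det = 0 := by rw [← hSS, det_mul, h, mul_zero]
    rw [this] at hdetM
    exact lt_irrefl _ hdetM
  have hSunit : IsUnit S.det := hdetS.isUnit
  have hSinv : S * S⁻¹ = 1 := mul_nonsing_inv S hSunit
  have hSinv' : S⁻¹ * S = 1 := nonsing_inv_mul S hSunit
  have hSherm : Sᴴ = S := hS.1
  set Q := S⁻¹ * P * S⁻¹ with hQdef
  have hQ : Q.PosSemidef := by
    have h1 : (S⁻¹)ᴴ = S⁻¹ := by rw [conjTranspose_nonsing_inv, hSherm]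
    have h2 := hP.mul_mul_conjTranspose_same S⁻¹
    rwa [h1] at h2
  have hdecomp : M + P = S * (1 + Q) * S := by
    rw [mul_add, add_mul, mul_one, hSS, hQdef]
    congr 1
    have : S * (S⁻¹ * P * S⁻¹) * S = (S * S⁻¹) * P * (S⁻¹ * S) := by
      noncomm_ring
    rw [this, hSinv, hSinv', one_mul, mul_one]
  -- spectral theorem for Q
  have hQH : Q.IsHermitian := hQ.1
  set U : Matrix (Fin m) (Fin m) ℂ := (hQH.eigenvectorUnitary : Matrix (Fin m) (Fin m) ℂ)
  have hU : U * star U = 1 := Matrix.mem_unitaryGroup_iff.mp hQH.eigenvectorUnitary.2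
  set D : Matrix (Fin m) (Fin m) ℂ := diagonal (RCLike.ofReal ∘ hQH.eigenvalues)
  have hQspec : Q = U * D * star U := hQH.spectral_theorem
  have hone : (1 : Matrix (Fin m) (Fin m) ℂ) + Q = U * (1 + D) * star U := by
    rw [mul_add, add_mul, mul_one, hU, hQspec]
  have hdet1Q : (1 + Q).det = ∏ i, (1 + (hQH.eigenvalues i : ℂ)) := by
    rw [hone, det_mul_right_comm, hU, one_mul]
    have : (1 : Matrix (Fin m) (Fin m) ℂ) + D =
        diagonal (fun i => 1 + (hQH.eigenvalues i : ℂ)) := by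
      rw [← diagonal_one, diagonal_add]
      rfl
    rw [this, det_diagonal]
  set c : ℝ := ∏ i, (1 + hQH.eigenvalues i) with hcdef
  have hc : (1:ℝ) ≤ c := by
    rw [hcdef]
    calc (1:ℝ) = ∏ _i : Fin m, (1:ℝ) := by simp
      _ ≤ ∏ i : Fin m, (1 + hQH.eigenvalues i) := by
          apply Finset.prod_le_prod
          · intro i _; norm_num
          · intro i _; linarith [hQ.eigenvalues_nonneg i]
  have hdet : (M + P).det = M.det * (c : ℂ) := by
    rw [hdecomp, det_mul, det_mul, mul_comm, ← mul_assoc, ← det_mul, hSS, hdet1Q]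
    rw [hcdef, Complex.ofReal_prod]
    push_cast
    rfl
  have hre : (M + P).det.re = M.det.re * c := by
    rw [hdet, Complex.mul_re]
    simp
  have hpos : 0 < M.det.re := by
    rw [Complex.lt_def] at hdetM
    simpa using hdetM.1
  rw [hre]
  exact le_mul_of_one_le_right hpos.le hc

private lemma quad_nonpos {E : Type*} [NormedAddCommGroup E] [NormedSpace ℝ E]
    {φ : E → ℝ} {U : Set E} (hU : IsOpen U) {z₀ : E} (hz₀ : z₀ ∈ U)
    (hφ : ContDiffOn ℝ (⊤ : ℕ∞) φ U) (hmax : ∀ w ∈ U, φ w ≤ φ z₀) (w : E) :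
    fderiv ℝ (fderiv ℝ φ) z₀ w w ≤ 0 := by
  by_contra hcon
  push_neg at hcon
  set c : ℝ := fderiv ℝ (fderiv ℝ φ) z₀ w w with hc
  set f' : E → (E →L[ℝ] ℝ) := fderiv ℝ φ with hf'
  have hf'C : ContDiffOn ℝ (⊤ : ℕ∞) f' U := hφ.fderiv_of_isOpen hU (by simp)
  set L : ℝ → E := fun s => z₀ + s • w with hL
  set ψ : ℝ → ℝ := fun s => φ (L s) with hψ
  have hLd : ∀ s : ℝ, HasDerivAt L w s := by
    intro s
    simpa [hL] using ((hasDerivAt_id s).smul_const w).const_add z₀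
  have hL0 : L 0 = z₀ := by simp [hL]
  -- radius
  have hVopen : IsOpen {s : ℝ | L s ∈ U} := by
    have : Continuous L := by continuity
    exact hU.preimage this
  have h0V : (0:ℝ) ∈ {s : ℝ | L s ∈ U} := by simp [hL0, hz₀]
  obtain ⟨r, hr, hball⟩ := Metric.isOpen_iff.mp hVopen 0 h0V
  -- first derivative of ψ
  have hdiff : ∀ s ∈ Metric.ball (0:ℝ) r, HasDerivAt ψ (f' (L s) w) s := by
    intro s hs
    have hLs : L s ∈ U := hball hs
    have : DifferentiableAt ℝ φ (L s) :=
      (hφ.differentiableOn (by simp)).differentiableAt (hU.mem_nhds hLs)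
    exact this.hasFDerivAt.comp_hasDerivAt s (hLd s)
  have hψ' : ∀ s ∈ Metric.ball (0:ℝ) r, deriv ψ s = f' (L s) w := fun s hs =>
    (hdiff s hs).deriv
  -- second derivative
  have hD2 : HasDerivAt (fun s => f' (L s) w) c 0 := by
    have h1 : DifferentiableAt ℝ f' z₀ :=
      (hf'C.differentiableOn (by simp)).differentiableAt (hU.mem_nhds hz₀)
    have h2 : HasDerivAt (fun s => f' (L s)) (fderiv ℝ f' z₀ w) 0 := by
      have h1' : HasFDerivAt f' (fderiv ℝ f' z₀) (L 0) := by
        rw [hL0]; exact h1.hasFDerivAt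
      exact h1'.comp_hasDerivAt 0 (hLd 0)
    simpa using h2.clm_apply (hasDerivAt_const 0 w)
  have hD2' : HasDerivAt (deriv ψ) c 0 := by
    apply hD2.congr_of_eventuallyEq
    filter_upwards [Metric.ball_mem_nhds (0:ℝ) hr] with s hs
    exact hψ' s hs
  -- local max at 0
  have hloc : IsLocalMax ψ 0 := by
    filter_upwards [Metric.ball_mem_nhds (0:ℝ) hr] with s hs
    calc ψ s ≤ φ z₀ := hmax _ (hball hs)
      _ = ψ 0 := by simp [hψ, hL0]
  have hψ'0 : deriv ψ 0 = 0 := hloc.deriv_eq_zero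
  -- positivity of deriv ψ on a right interval
  have hslope : Tendsto (slope (deriv ψ) 0) (𝓝[≠] 0) (𝓝 c) :=
    hasDerivAt_iff_tendsto_slope.mp hD2'
  have hev : ∀ᶠ s in 𝓝[>] (0:ℝ), 0 < slope (deriv ψ) 0 s := by
    have h1 : ∀ᶠ x in 𝓝 c, 0 < x := eventually_gt_nhds hcon
    exact (hslope.mono_left (nhdsWithin_mono 0 (fun s hs => ne_of_gt hs))).eventually h1
  have hev2 : ∀ᶠ s in 𝓝[>] (0:ℝ), 0 < deriv ψ s := by
    have hmem : ∀ᶠ s in 𝓝[>] (0:ℝ), s ∈ Set.Ioi (0:ℝ) := eventually_mem_nhdsWithin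
    filter_upwards [hev, hmem] with s hs hs'
    have hspos : (0:ℝ) < s := hs'
    have : slope (deriv ψ) 0 s = deriv ψ s / s := by
      rw [slope_def_field, hψ'0, sub_zero, sub_zero]
    rw [this] at hs
    exact (div_pos_iff.mp hs).resolve_right (fun h => absurd hspos (not_lt.mpr h.2.le)) |>.1
  rw [eventually_nhdsWithin_iff, Metric.eventually_nhds_iff] at hev2
  obtain ⟨δ, hδ, hδpos⟩ := hev2
  set t := min δ r / 2 with ht
  have htpos : 0 < t := by positivity
  have htδ : t < δ := by
    have : min δ r ≤ δ := min_le_left _ _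
    linarith
  have htr : t < r := by
    have : min δ r ≤ r := min_le_right _ _
    linarith
  have hmono : StrictMonoOn ψ (Set.Icc 0 t) := by
    apply strictMonoOn_of_deriv_pos (convex_Icc 0 t)
    · apply ContinuousOn.mono (s := Metric.ball 0 r)
      · exact fun s hs => ((hdiff s hs).continuousAt).continuousWithinAt
      · intro s hs
        rw [Metric.mem_ball, Real.dist_eq, sub_zero]
        rcases hs with ⟨h1, h2⟩
        rw [_root_.abs_of_nonneg h1]
        linarith
    · intro s hs
      rw [interior_Icc] at hs
      apply hδpos
      · rw [Real.dist_eq, sub_zero, _root_.abs_of_pos hs.1]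
        linarith [hs.2]
      · exact hs.1
  have h1 : ψ 0 < ψ t := hmono (by constructor <;> norm_num [htpos.le]) (by
      constructor <;> [exact htpos.le; rfl]) htpos
  have h2 : ψ t ≤ ψ 0 := by
    have : L t ∈ U := by
      apply hball
      rw [Metric.mem_ball, Real.dist_eq, sub_zero, _root_.abs_of_pos htpos]
      exact htr
    calc ψ t ≤ φ z₀ := hmax _ this
      _ = ψ 0 := by simp [hψ, hL0]
  linarith

private lemma neg_hessian_posSemidef {φ : EuclideanSpace ℂ (Fin n) → ℝ}
    {U : Set (EuclideanSpace ℂ (Fin n))} (hU : IsOpen U)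
    {z₀ : EuclideanSpace ℂ (Fin n)} (hz₀ : z₀ ∈ U)
    (hφ : ContDiffOn ℝ (⊤ : ℕ∞) φ U) (hmax : ∀ w ∈ U, φ w ≤ φ z₀) :
    (-(complexHessian φ z₀)).PosSemidef := by
  classical
  set b : EuclideanSpace ℂ (Fin n) →L[ℝ] EuclideanSpace ℂ (Fin n) →L[ℝ] ℝ :=
    fderiv ℝ (fderiv ℝ φ) z₀ with hbdef
  have hsym : ∀ u v : EuclideanSpace ℂ (Fin n), b u v = b v u := by
    have h2 : ContDiffAt ℝ 2 φ z₀ :=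
      (hφ.contDiffAt (hU.mem_nhds hz₀)).of_le (WithTop.coe_le_coe.mpr (le_top : (2 : ℕ∞) ≤ ⊤))
    exact fun u v => (h2.isSymmSndFDerivAt (by simp)) u v
  set e : Fin n → EuclideanSpace ℂ (Fin n) := fun α => EuclideanSpace.single α 1 with hedef
  set f : Fin n → EuclideanSpace ℂ (Fin n) := fun α => Complex.I • EuclideanSpace.single α 1
    with hfdef
  set p : Fin n → Fin n → ℝ := fun α β => b (e α) (e β) + b (f α) (f β) with hpdef
  set q : Fin n → Fin n → ℝ := fun α β => b (f α) (e β) - b (e α) (f β) with hqdef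
  have hiter : ∀ u v : EuclideanSpace ℂ (Fin n), iteratedFDeriv ℝ 2 φ z₀ ![u, v] = b u v := by
    intro u v
    rw [iteratedFDeriv_two_apply]
    simp
    rfl
  have hA : ∀ α β, complexHessian φ z₀ α β
      = ((p α β / 4 : ℝ) : ℂ) + ((q α β / 4 : ℝ) : ℂ) * Complex.I := by
    intro α β
    simp only [complexHessian, hiter, hpdef, hqdef]
    push_cast
    ring
  have hpsym : ∀ α β, p β α = p α β := fun α β => by
    simp only [hpdef, hsym (e β) (e α), hsym (f β) (f α)]
  have hqasym : ∀ α β, q β α = -q α β := fun α β => by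
    simp only [hqdef]
    rw [hsym (f β) (e α), hsym (e β) (f α)]
    ring
  rw [posSemidef_iff_dotProduct_mulVec]
  constructor
  · -- Hermitian
    rw [Matrix.IsHermitian, conjTranspose_neg]
    congr 1
    ext α β
    rw [conjTranspose_apply, hA, hA, hpsym β α, hqasym β α]
    simp only [Complex.star_def, _root_.map_add, _root_.map_mul, Complex.conj_ofReal,
      Complex.conj_I]
    push_cast
    ring
  · -- nonneg quadratic form
    intro v
    set x : Fin n → ℝ := fun α => (v α).re with hxdef
    set y : Fin n → ℝ := fun α => (v α).im with hydef
    set w : EuclideanSpace ℂ (Fin n) := ∑ α, (x α • e α + y α • f α) with hwdef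
    have hbsum : ∀ u' : Fin n → EuclideanSpace ℂ (Fin n),
        b (∑ α, u' α) (∑ β, u' β) = ∑ α, ∑ β, b (u' α) (u' β) := by
      intro u'
      rw [map_sum]
      refine (Finset.sum_congr rfl fun β _ => ?_).trans Finset.sum_comm
      rw [map_sum, ContinuousLinearMap.sum_apply]
    have hIw : Complex.I • w = ∑ α, (x α • f α - y α • e α) := by
      rw [hwdef, Finset.smul_sum]
      refine Finset.sum_congr rfl fun α _ => ?_
      rw [smul_add, smul_comm (Complex.I) (x α), smul_comm (Complex.I) (y α)]
      have : Complex.I • f α = -e α := by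
        rw [hfdef]
        rw [smul_smul, Complex.I_mul_I, hedef]
        simp
      rw [this, hfdef]
      simp [smul_neg]
      abel
    have hkey : b w w + b (Complex.I • w) (Complex.I • w)
        = ∑ α, ∑ β, ((x α * x β + y α * y β) * p α β
            - (x α * y β - y α * x β) * q α β) := by
      rw [hwdef, hIw, hbsum, hbsum, ← Finset.sum_add_distrib]
      refine Finset.sum_congr rfl fun α _ => ?_
      rw [← Finset.sum_add_distrib]
      refine Finset.sum_congr rfl fun β _ => ?_
      simp only [map_add, _root_.map_smul, map_sub, ContinuousLinearMap.add_apply,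
        ContinuousLinearMap.coe_smul', Pi.smul_apply, ContinuousLinearMap.sub_apply,
        map_neg, ContinuousLinearMap.neg_apply, smul_eq_mul, hpdef, hqdef]
      ring
    have hqw : ∀ u : EuclideanSpace ℂ (Fin n), b u u ≤ 0 := quad_nonpos hU hz₀ hφ hmax
    have hr : (b w w + b (Complex.I • w) (Complex.I • w)) / 4 ≤ 0 := by
      have h1 := hqw w
      have h2 := hqw (Complex.I • w)
      linarith
    have hv : ∀ α, v α = (x α : ℂ) + (y α : ℂ) * Complex.I :=
      fun α => (Complex.re_add_im (v α)).symm
    have hconj : ∀ α, (starRingEnd ℂ) (v α) = (x α : ℂ) - (y α : ℂ) * Complex.I := by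
      intro α
      rw [hv α]
      simp [Complex.ext_iff]
    have hanti : ∀ (G : Fin n → Fin n → ℂ), (∀ α β, G β α = -G α β) →
        ∑ α, ∑ β, G α β = 0 := by
      intro G hG
      have h1 : ∑ α, ∑ β, G α β = ∑ β, ∑ α, G α β := Finset.sum_comm
      have h2 : ∑ β, ∑ α, G α β = ∑ β, ∑ α, -(G β α) :=
        Finset.sum_congr rfl fun β _ => Finset.sum_congr rfl fun α _ => by rw [hG β α]
      have h3 : ∑ β, ∑ α, -(G β α) = -∑ β, ∑ α, G β α := by
        simp
      have hS := h1.trans (h2.trans h3)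
      linear_combination hS / 2
    have hform : dotProduct (star v) (complexHessian φ z₀ *ᵥ v)
        = (((b w w + b (Complex.I • w) (Complex.I • w)) / 4 : ℝ) : ℂ) := by
      rw [hkey]
      have hL : dotProduct (star v) (complexHessian φ z₀ *ᵥ v)
          = ∑ α, ∑ β, (starRingEnd ℂ) (v α) * (complexHessian φ z₀ α β * v β) := by
        simp [dotProduct, mulVec, Finset.mul_sum, Complex.star_def]
      have hR : (((∑ α, ∑ β, ((x α * x β + y α * y β) * p α β
            - (x α * y β - y α * x β) * q α β)) / 4 : ℝ) : ℂ)
          = ∑ α, ∑ β, ((((x α * x β + y α * y β) * p α β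
            - (x α * y β - y α * x β) * q α β) / 4 : ℝ) : ℂ) := by
        push_cast [Finset.sum_div]
        rfl
      rw [hL, hR, ← sub_eq_zero, ← Finset.sum_sub_distrib]
      have hterm : ∀ α β : Fin n, (starRingEnd ℂ) (v α) * (complexHessian φ z₀ α β * v β)
          - ((((x α * x β + y α * y β) * p α β
            - (x α * y β - y α * x β) * q α β) / 4 : ℝ) : ℂ)
          = ((((x α * y β - y α * x β) * p α β
            + (x α * x β + y α * y β) * q α β) / 4 : ℝ) : ℂ) * Complex.I := by
        intro α β
        rw [hA, hconj, hv β]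
        apply Complex.ext <;>
          simp only [Complex.mul_re, Complex.mul_im, Complex.add_re, Complex.add_im,
            Complex.sub_re, Complex.sub_im, Complex.ofReal_re, Complex.ofReal_im,
            Complex.I_re, Complex.I_im] <;> ring
      have hsplit : ∑ α, ((∑ β, (starRingEnd ℂ) (v α) * (complexHessian φ z₀ α β * v β))
          - ∑ β, ((((x α * x β + y α * y β) * p α β
            - (x α * y β - y α * x β) * q α β) / 4 : ℝ) : ℂ))
          = ∑ α, ∑ β, ((starRingEnd ℂ) (v α) * (complexHessian φ z₀ α β * v β)
          - ((((x α * x β + y α * y β) * p α β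
            - (x α * y β - y α * x β) * q α β) / 4 : ℝ) : ℂ)) :=
        Finset.sum_congr rfl fun α _ => (Finset.sum_sub_distrib _ _).symm
      rw [hsplit]
      apply hanti
      intro α β
      rw [hterm α β, hterm β α, hpsym α β, hqasym α β]
      push_cast
      ring
    have hfinal : dotProduct (star v) ((-(complexHessian φ z₀)) *ᵥ v)
        = ((-((b w w + b (Complex.I • w) (Complex.I • w)) / 4) : ℝ) : ℂ) := by
      rw [Matrix.neg_mulVec, dotProduct_neg, hform]
      push_cast
      ring
    rw [hfinal, Complex.zero_le_real]
    linarith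

end auxPMPMA

/-- Monge–Ampère form of the parabolic maximum principle: if
`Ḣ ≤ log det(g + (H_{αβ̄})) − log det g` on `Ω × (0,T)` with `g` a continuous
family of positive definite Hermitian matrices and `g + (H_{αβ̄})` positive
definite, then the sup of `H` over `Ω̄ × [0,T)` is attained on the parabolic
boundary. -/
theorem parabolic_maximum_principle_monge_ampere
    (n : ℕ) (Ω : Set (EuclideanSpace ℂ (Fin n)))
    (hΩ_open : IsOpen Ω) (hΩ_conn : IsConnected Ω)
    (hΩ_bdd : Bornology.IsBounded Ω)
    (T : ℝ) (hT : 0 < T)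
    (g : EuclideanSpace ℂ (Fin n) × ℝ → Matrix (Fin n) (Fin n) ℂ)
    (hg_cont : ContinuousOn g (Ω ×ˢ Set.Ioo 0 T))
    (hg_pos : ∀ p ∈ Ω ×ˢ Set.Ioo 0 T, (g p).PosDef)
    (H : EuclideanSpace ℂ (Fin n) × ℝ → ℝ)
    (hH_smooth : ContDiffOn ℝ (⊤ : ℕ∞) H (Ω ×ˢ Set.Ioo 0 T))
    (hH_cont : ContinuousOn H (closure Ω ×ˢ Set.Ico 0 T))
    (hpos : ∀ z ∈ Ω, ∀ t ∈ Set.Ioo 0 T,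
      (g (z, t) + complexHessian (fun w => H (w, t)) z).PosDef)
    (hineq : ∀ z ∈ Ω, ∀ t ∈ Set.Ioo 0 T,
      deriv (fun s => H (z, s)) t ≤
        Real.log ((g (z, t) + complexHessian (fun w => H (w, t)) z).det.re)
          - Real.log ((g (z, t)).det.re)) :
    sSup (H '' (closure Ω ×ˢ Set.Ico 0 T)) =
      sSup (H '' parabolicBoundary Ω T) := by
  classical
  obtain ⟨z₁, hz₁⟩ := hΩ_conn.nonempty
  have hKcomp : IsCompact (closure Ω) := hΩ_bdd.isCompact_closure
  have hKne : (closure Ω).Nonempty := ⟨z₁, subset_closure hz₁⟩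
  set PB := parabolicBoundary Ω T with hPBdef
  set S := closure Ω ×ˢ Set.Ico 0 T with hSdef
  have hPBsub : PB ⊆ S := by
    rintro ⟨z, t⟩ (⟨hz, ht⟩ | ⟨hz, ht⟩)
    · exact ⟨frontier_subset_closure hz, ht.1.le, ht.2⟩
    · rcases ht with rfl
      exact ⟨hz, le_refl 0, hT⟩
  have hPBne : PB.Nonempty := ⟨(z₁, 0), Or.inr ⟨subset_closure hz₁, rfl⟩⟩
  have hSne : S.Nonempty := hPBne.mono hPBsub
  -- the key estimate
  have key : ∀ (hbdd : BddAbove (H '' PB)), ∀ p ∈ S, H p ≤ sSup (H '' PB) := by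
    intro hbdd p hp
    obtain ⟨z, t⟩ := p
    obtain ⟨hz, ht⟩ := hp
    set m := sSup (H '' PB) with hm
    -- it suffices to prove H (z,t) ≤ m + δ for all δ > 0
    by_contra hlt
    push_neg at hlt
    set δ := (H (z, t) - m) / 2 with hδdef
    have hδ : 0 < δ := by simp only [hδdef]; linarith
    suffices hsuff : H (z, t) ≤ m + δ by
      simp only [hδdef] at hsuff; linarith
    set ε := δ / T with hεdef
    have hε : 0 < ε := div_pos hδ hT
    have hεT : ε * T = δ := by
      rw [hεdef, div_mul_cancel₀ _ hT.ne']
    -- the compact cylinder up to time t₁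
    set t₁ := (t + T) / 2 with ht₁def
    have ht₁0 : 0 ≤ t₁ := by simp only [ht₁def]; linarith [ht.1, hT.le]
    have htt₁ : t ≤ t₁ := by simp only [ht₁def]; linarith [ht.2]
    have ht₁T : t₁ < T := by simp only [ht₁def]; linarith [ht.2]
    set C := closure Ω ×ˢ Set.Icc 0 t₁ with hCdef
    have hCcomp : IsCompact C := hKcomp.prod isCompact_Icc
    have hCne : C.Nonempty := ⟨(z₁, 0), subset_closure hz₁, le_refl 0, ht₁0⟩
    have hCsub : C ⊆ closure Ω ×ˢ Set.Ico 0 T := by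
      rintro ⟨w, s⟩ ⟨hw, hs⟩
      exact ⟨hw, hs.1, lt_of_le_of_lt hs.2 ht₁T⟩
    set F : EuclideanSpace ℂ (Fin n) × ℝ → ℝ := fun r => H r - ε * r.2 with hFdef
    have hFcont : ContinuousOn F C :=
      (hH_cont.mono hCsub).sub ((continuous_const.mul continuous_snd).continuousOn)
    obtain ⟨q, hqC, hqmax⟩ := hCcomp.exists_isMaxOn hCne hFcont
    obtain ⟨z₀, t₀⟩ := q
    have hmaxF : ∀ r ∈ C, F r ≤ F (z₀, t₀) := fun r hr => hqmax hr
    -- the max point lies on the parabolic boundary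
    have hqPB : (z₀, t₀) ∈ PB := by
      by_contra hq
      have hz₀K : z₀ ∈ closure Ω := hqC.1
      have ht₀m : t₀ ∈ Set.Icc 0 t₁ := hqC.2
      have ht₀0 : t₀ ≠ 0 := by
        intro h
        exact hq (Or.inr ⟨hz₀K, by simp [h]⟩)
      have ht₀pos : 0 < t₀ := lt_of_le_of_ne ht₀m.1 (Ne.symm ht₀0)
      have ht₀T : t₀ < T := lt_of_le_of_lt ht₀m.2 ht₁T
      have ht₀Ioo : t₀ ∈ Set.Ioo 0 T := ⟨ht₀pos, ht₀T⟩
      have hz₀Ω : z₀ ∈ Ω := by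
        by_contra hzo
        have hfr : z₀ ∈ frontier Ω := by
          rw [frontier, hΩ_open.interior_eq]
          exact ⟨hz₀K, hzo⟩
        exact hq (Or.inl ⟨hfr, ht₀Ioo⟩)
      -- spatial slice
      have hφ : ContDiffOn ℝ (⊤ : ℕ∞) (fun w => H (w, t₀)) Ω := by
        have hline : ContDiff ℝ (⊤ : ℕ∞) (fun w : EuclideanSpace ℂ (Fin n) => (w, t₀)) :=
          contDiff_id.prodMk contDiff_const
        exact hH_smooth.comp hline.contDiffOn (fun w hw => ⟨hw, ht₀Ioo⟩)
      have hmaxφ : ∀ w ∈ Ω, H (w, t₀) ≤ H (z₀, t₀) := by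
        intro w hw
        have h1 := hmaxF (w, t₀) ⟨subset_closure hw, ht₀m⟩
        simp only [hFdef] at h1
        linarith
      have hPSD := neg_hessian_posSemidef hΩ_open hz₀Ω hφ hmaxφ
      have hPD := hpos z₀ hz₀Ω t₀ ht₀Ioo
      set A := complexHessian (fun w => H (w, t₀)) z₀ with hAdef
      have hdetle : (g (z₀, t₀) + A).det.re ≤ (g (z₀, t₀)).det.re := by
        have h2 := det_re_le_det_re_add hPD hPSD
        rwa [add_neg_cancel_right] at h2
      have hdetpos : 0 < (g (z₀, t₀) + A).det.re := by
        have := hPD.det_pos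
        rw [Complex.lt_def] at this
        simpa using this.1
      have hdetpos' : 0 < (g (z₀, t₀)).det.re := lt_of_lt_of_le hdetpos hdetle
      have hRHS : Real.log ((g (z₀, t₀) + A).det.re) - Real.log ((g (z₀, t₀)).det.re) ≤ 0 := by
        have := (Real.log_le_log_iff hdetpos hdetpos').mpr hdetle
        linarith
      have hderiv : deriv (fun s => H (z₀, s)) t₀ ≤ 0 :=
        le_trans (hineq z₀ hz₀Ω t₀ ht₀Ioo) hRHS
      -- time derivative
      have hHat : ContDiffAt ℝ (⊤ : ℕ∞) H (z₀, t₀) :=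
        hH_smooth.contDiffAt ((hΩ_open.prod isOpen_Ioo).mem_nhds ⟨hz₀Ω, ht₀Ioo⟩)
      have hcomp : ContDiffAt ℝ (⊤ : ℕ∞) (fun s => H (z₀, s)) t₀ := by
        have hline : ContDiffAt ℝ (⊤ : ℕ∞) (fun s : ℝ => ((z₀, s) : EuclideanSpace ℂ (Fin n) × ℝ)) t₀ :=
          contDiffAt_const.prodMk contDiffAt_id
        exact hHat.comp t₀ hline
      have hdiffT : DifferentiableAt ℝ (fun s => H (z₀, s)) t₀ :=
        hcomp.differentiableAt (by simp)
      set d := deriv (fun s => H (z₀, s)) t₀ - ε with hddef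
      have hψd : HasDerivAt (fun s => H (z₀, s) - ε * s) d t₀ := by
        have h1 := hdiffT.hasDerivAt
        have h2 : HasDerivAt (fun s : ℝ => ε * s) ε t₀ := by
          simpa using (hasDerivAt_id t₀).const_mul ε
        exact h1.sub h2
      have hmaxψ : IsMaxOn (fun s => H (z₀, s) - ε * s) (Set.Icc 0 t₁) t₀ := by
        intro s hs
        have h1 := hmaxF (z₀, s) ⟨subset_closure hz₀Ω, hs⟩
        simpa [hFdef] using h1
      have hcone : (-t₀) ∈ posTangentConeAt (Set.Icc 0 t₁) t₀ := by
        apply mem_posTangentConeAt_of_segment_subset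
        have h0 : t₀ + -t₀ = 0 := by ring
        rw [h0, segment_symm, segment_eq_Icc ht₀pos.le]
        exact Set.Icc_subset_Icc_right ht₀m.2
      have hnonpos := hmaxψ.localize.hasFDerivWithinAt_nonpos
        hψd.hasFDerivAt.hasFDerivWithinAt hcone
      simp only [ContinuousLinearMap.smulRight_apply, ContinuousLinearMap.one_apply,
        ContinuousLinearMap.toSpanSingleton_apply, smul_eq_mul] at hnonpos
      -- hnonpos : (-t₀) * d ≤ 0, so 0 ≤ d; but d ≤ -ε < 0
      have hd0 : 0 ≤ d := by nlinarith
      have hdneg : d < 0 := by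
        simp only [hddef]
        linarith
      linarith
    -- conclude the estimate
    have hqm : H (z₀, t₀) ≤ m := le_csSup hbdd ⟨(z₀, t₀), hqPB, rfl⟩
    have hzt : ((z, t) : EuclideanSpace ℂ (Fin n) × ℝ) ∈ C := ⟨hz, ht.1, htt₁⟩
    have h1 := hmaxF (z, t) hzt
    simp only [hFdef] at h1
    have ht₀nonneg : 0 ≤ t₀ := hqC.2.1
    have hεt : ε * t ≤ ε * T := by
      apply mul_le_mul_of_nonneg_left ht.2.le hε.le
    calc H (z, t) = (H (z, t) - ε * t) + ε * t := by ring
      _ ≤ (H (z₀, t₀) - ε * t₀) + ε * t := by linarith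
      _ ≤ m + ε * T := by nlinarith
      _ = m + δ := by rw [hεT]
  -- assemble
  by_cases hbdd : BddAbove (H '' PB)
  · have hub : ∀ xval ∈ H '' S, xval ≤ sSup (H '' PB) := by
      rintro xval ⟨p, hp, rfl⟩
      exact key hbdd p hp
    apply le_antisymm
    · exact csSup_le (hSne.image H) hub
    · exact csSup_le_csSup ⟨sSup (H '' PB), hub⟩ (hPBne.image H)
        (Set.image_mono (f := H) hPBsub)
  · have hbdd' : ¬BddAbove (H '' S) := fun h =>
      hbdd (h.mono (Set.image_mono (f := H) hPBsub))
    rw [csSup_of_not_bddAbove hbdd', csSup_of_not_bddAbove hbdd]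
end

section
/- Let Ω be a bounded domain in ℂⁿ, A ≥ 0 and T > 0. Let f be a continuous real-valued function on Ω̄ × [0,T). Let u, v ∈ C^∞(Ω × (0,T)) ∩ C(Ω̄ × [0,T)) be real-valued such that for every t ∈ (0,T) the complex Hessians of u(·,t) and v(·,t) are positive definite at every point of Ω, and such that on Ω × (0,T): ∂u/∂t ≤ log det(u_{αβ̄}) − A·u + f(z,t) and ∂v/∂t ≥ log det(v_{αβ̄}) − A·v + f(z,t). Then sup_{Ω×(0,T)} (u − v) ≤ max{0, sup_{∂_P(Ω×(0,T))} (u − v)}. -/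
open Set Metric Complex ComplexOrder

open Matrix
open scoped MatrixOrder

lemma one_le_eigenvalues_of_posSemidef_sub_one {m : ℕ} {A : Matrix (Fin m) (Fin m) ℂ}
    (hA : A.IsHermitian) (h : (A - 1).PosSemidef) (i : Fin m) : 1 ≤ hA.eigenvalues i := by
  set y : Fin m → ℂ := ⇑(hA.eigenvectorBasis i) with hy
  have hx : A *ᵥ y = (hA.eigenvalues i) • y := hA.mulVec_eigenvectorBasis i
  have hnorm : (star y) ⬝ᵥ y = 1 := by
    have h1 : (inner ℂ (hA.eigenvectorBasis i) (hA.eigenvectorBasis i) : ℂ) = 1 := by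
      rw [inner_self_eq_norm_sq_to_K, hA.eigenvectorBasis.orthonormal.1 i]
      norm_num
    rw [EuclideanSpace.inner_eq_star_dotProduct] at h1
    rw [dotProduct_comm] at h1
    simpa [hy] using h1
  have h2 := h.dotProduct_mulVec_nonneg y
  rw [Matrix.sub_mulVec, Matrix.one_mulVec, dotProduct_sub, hx,
    dotProduct_smul, hnorm] at h2
  have h3 : (0:ℂ) ≤ ((hA.eigenvalues i : ℝ) : ℂ) - 1 := by simpa using h2
  have h4 := (Complex.le_def.mp h3).1
  simp at h4
  linarith

lemma det_re_le_det_re_of_posSemidef_sub {m : ℕ} {Hu Hv : Matrix (Fin m) (Fin m) ℂ}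
    (hu : Hu.PosDef) (hD : (Hv - Hu).PosSemidef) : Hu.det.re ≤ Hv.det.re := by
  classical
  set S := CFC.sqrt Hu with hSdef
  have hS : S.PosSemidef := (CFC.sqrt_nonneg Hu).posSemidef
  have hSS : S * S = Hu := CFC.sqrt_mul_sqrt_self Hu hu.posSemidef.nonneg
  have hdetS : IsUnit S.det := by
    have : S.det * S.det = Hu.det := by rw [← Matrix.det_mul, hSS]
    have h0 : Hu.det ≠ 0 := hu.det_pos.ne'
    exact isUnit_iff_ne_zero.mpr (fun h => h0 (by rw [← this, h, zero_mul]))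
  have hSinv : S⁻¹.IsHermitian := hS.1.inv
  set P := S⁻¹ * (Hv - Hu) * S⁻¹ with hPdef
  have hP : P.PosSemidef := by
    have := hD.conjTranspose_mul_mul_same S⁻¹
    rwa [hSinv.eq] at this
  have hHerm1P : (1 + P).IsHermitian := Matrix.isHermitian_one.add hP.1
  have h1P : ((1 + P) - 1).PosSemidef := by simpa using hP
  have heig : ∀ i, 1 ≤ hHerm1P.eigenvalues i :=
    fun i => one_le_eigenvalues_of_posSemidef_sub_one hHerm1P h1P i
  have hdet1P : (1 + P).det = ((∏ i, hHerm1P.eigenvalues i : ℝ) : ℂ) := by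
    rw [hHerm1P.det_eq_prod_eigenvalues]; push_cast; rfl
  have hprod : 1 ≤ ∏ i, hHerm1P.eigenvalues i := by
    calc (1:ℝ) = ∏ _i : Fin m, 1 := by simp
      _ ≤ ∏ i, hHerm1P.eigenvalues i :=
        Finset.prod_le_prod (by simp) (fun i _ => heig i)
  have hid : Hv = S * (1 + P) * S := by
    rw [mul_add, add_mul, mul_one, hSS, hPdef]
    rw [← mul_assoc, ← mul_assoc, Matrix.mul_nonsing_inv S hdetS, one_mul,
      mul_assoc, Matrix.nonsing_inv_mul S hdetS, mul_one]
    abel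
  have hdetv : Hv.det = Hu.det * (1 + P).det := by
    rw [hid, Matrix.det_mul, Matrix.det_mul, mul_comm S.det, mul_assoc, ← Matrix.det_mul, hSS]
    ring
  have him : Hu.det = ((Hu.det.re : ℝ) : ℂ) := by
    have := hu.det_pos
    rw [Complex.lt_def] at this
    apply Complex.ext <;> simp [this.2.symm]
  have hre : 0 < Hu.det.re := by
    have := hu.det_pos
    rw [Complex.lt_def] at this
    simpa using this.1
  rw [hdetv, hdet1P, him]
  rw [← Complex.ofReal_mul]
  simp only [Complex.ofReal_re]
  nlinarith

lemma secondDeriv_nonpos_of_isLocalMax {ψ : ℝ → ℝ}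
    (h : ContDiffAt ℝ 2 ψ 0) (hmax : IsLocalMax ψ 0) :
    deriv (deriv ψ) 0 ≤ 0 := by
  by_contra hc
  push_neg at hc
  -- get an open set u ∋ 0 with ContDiffOn 2 ψ u
  obtain ⟨s, hs, hψs⟩ : ∃ s ∈ nhds (0:ℝ), ContDiffOn ℝ 2 ψ s :=
    h.contDiffOn le_rfl (by simp)
  obtain ⟨uo, huo_sub, huo_open, huo_mem⟩ := _root_.mem_nhds_iff.mp hs
  have hψu : ContDiffOn ℝ 2 ψ uo := hψs.mono huo_sub
  have hd1 : ∀ x ∈ uo, DifferentiableAt ℝ ψ x := fun x hx =>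
    ((hψu x hx).contDiffAt (huo_open.mem_nhds hx)).differentiableAt two_ne_zero
  have hderiv_diff : DifferentiableAt ℝ (deriv ψ) 0 := by
    have h2 : ContDiffAt ℝ 1 (fderiv ℝ ψ) 0 := h.fderiv_right (by norm_num)
    have : ContDiffAt ℝ 1 (deriv ψ) 0 := by
      have : deriv ψ = fun x => fderiv ℝ ψ x 1 := by
        ext x; rw [← fderiv_apply_one_eq_deriv]
      rw [this]
      exact h2.clm_apply contDiffAt_const
    exact this.differentiableAt one_ne_zero
  have hd0 : deriv ψ 0 = 0 := hmax.deriv_eq_zero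
  have hslope := hasDerivAt_iff_tendsto_slope.mp hderiv_diff.hasDerivAt
  -- eventually on the right, deriv ψ > 0
  have hev : ∀ᶠ x in nhdsWithin 0 (Ioi 0), 0 < slope (deriv ψ) 0 x := by
    have h1 : Ioi (0:ℝ) ⊆ {(0:ℝ)}ᶜ := fun x hx => ne_of_gt hx
    exact (hslope.mono_left (nhdsWithin_mono _ h1)).eventually (eventually_gt_nhds hc)
  have hev2 : ∀ᶠ x in nhdsWithin 0 (Ioi 0), 0 < deriv ψ x := by
    filter_upwards [hev, self_mem_nhdsWithin] with x hx hx0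
    have hsl : slope (deriv ψ) 0 x = deriv ψ x / x := by
      simp [slope_def_field, hd0, div_eq_mul_inv]
    rw [hsl] at hx
    rcases div_pos_iff.mp hx with ⟨h1, _⟩ | ⟨_, h2⟩
    · exact h1
    · exact absurd hx0 (by simp; linarith)
  obtain ⟨e, he, hIoo⟩ := mem_nhdsGT_iff_exists_Ioo_subset.mp hev2
  have hepos : (0:ℝ) < e := he
  obtain ⟨d, hd, hball⟩ := Metric.mem_nhds_iff.mp
    (Filter.inter_mem (huo_open.mem_nhds huo_mem) hmax)
  set ε := min (e/2) (d/2) with hε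
  have hεpos : 0 < ε := lt_min (by linarith) (by linarith)
  have hmem : ∀ x ∈ Icc 0 ε, x ∈ uo ∧ ψ x ≤ ψ 0 := by
    intro x hx
    have hxd : dist x 0 < d := by
      rw [Real.dist_eq, sub_zero, _root_.abs_of_nonneg hx.1]
      have : x ≤ ε := hx.2
      have : ε ≤ d/2 := min_le_right _ _
      linarith
    exact hball hxd
  have hmono : StrictMonoOn ψ (Icc 0 ε) := by
    apply strictMonoOn_of_deriv_pos (convex_Icc 0 ε)
    · exact (hψu.continuousOn).mono (fun x hx => (hmem x hx).1)
    · intro x hx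
      rw [interior_Icc] at hx
      apply hIoo
      refine ⟨hx.1, ?_⟩
      have : ε ≤ e/2 := min_le_left _ _
      have := hx.2
      linarith
  have hlt : ψ 0 < ψ ε := hmono (left_mem_Icc.mpr hεpos.le) (right_mem_Icc.mpr hεpos.le) hεpos
  linarith [(hmem ε (right_mem_Icc.mpr hεpos.le)).2]

lemma deriv_deriv_line {E : Type*} [NormedAddCommGroup E] [NormedSpace ℝ E]
    {φ : E → ℝ} {z : E} (hφ : ContDiffAt ℝ 2 φ z) (w : E) :
    deriv (deriv (fun t : ℝ => φ (z + t • w))) 0 = fderiv ℝ (fderiv ℝ φ) z w w := by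
  obtain ⟨s, hs, hψs⟩ : ∃ s ∈ nhds z, ContDiffOn ℝ 2 φ s :=
    hφ.contDiffOn le_rfl (by simp)
  obtain ⟨uo, huo_sub, huo_open, huo_mem⟩ := _root_.mem_nhds_iff.mp hs
  have hφu : ContDiffOn ℝ 2 φ uo := hψs.mono huo_sub
  set L : ℝ → E := fun t => z + t • w with hL
  have hLcont : Continuous L := by fun_prop
  have hL0 : L 0 = z := by simp [hL]
  set I := L ⁻¹' uo with hI
  have hIopen : IsOpen I := huo_open.preimage hLcont
  have hI0 : (0:ℝ) ∈ I := by simp [hI, hL0, huo_mem]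
  have hLd : ∀ t : ℝ, HasDerivAt L w t := by
    intro t
    simpa [hL] using ((hasDerivAt_id t).smul_const w).const_add z
  -- first derivative on I
  have hd1 : ∀ t ∈ I, HasDerivAt (fun t => φ (L t)) ((fderiv ℝ φ (L t)) w) t := by
    intro t ht
    have hdiff : DifferentiableAt ℝ φ (L t) :=
      ((hφu (L t) ht).contDiffAt (huo_open.mem_nhds ht)).differentiableAt two_ne_zero
    exact hdiff.hasFDerivAt.comp_hasDerivAt t (hLd t)
  have hev : deriv (fun t => φ (L t)) =ᶠ[nhds 0] (fun t => (fderiv ℝ φ (L t)) w) := by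
    filter_upwards [hIopen.mem_nhds hI0] with t ht
    exact (hd1 t ht).deriv
  have hfd : DifferentiableAt ℝ (fderiv ℝ φ) z :=
    (hφ.fderiv_right (m := 1) (by norm_num)).differentiableAt one_ne_zero
  have hg : HasDerivAt (fun t => fderiv ℝ φ (L t)) (fderiv ℝ (fderiv ℝ φ) z w) 0 := by
    have hfd' : HasFDerivAt (fderiv ℝ φ) (fderiv ℝ (fderiv ℝ φ) z) (L 0) := by
      rw [hL0]; exact hfd.hasFDerivAt
    exact hfd'.comp_hasDerivAt 0 (hLd 0)
  have hgw : HasDerivAt (fun t => (fderiv ℝ φ (L t)) w) ((fderiv ℝ (fderiv ℝ φ) z w) w) 0 := by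
    have happ := (ContinuousLinearMap.apply ℝ ℝ w).hasFDerivAt.comp_hasDerivAt 0 hg
    exact happ
  rw [hev.deriv_eq]
  exact hgw.deriv


section quadform

variable {n : ℕ}

local notation "E'" => EuclideanSpace ℂ (Fin n)

/-- complexified quadratic form of a real bilinear map -/
noncomputable def hq (B : E' →L[ℝ] E' →L[ℝ] ℝ) (x y : E') : ℂ :=
  ((B x y + B (Complex.I • x) (Complex.I • y) : ℝ) : ℂ) / 4
    + Complex.I * ((B (Complex.I • x) y - B x (Complex.I • y) : ℝ) : ℂ) / 4

lemma real_smul_eq (x : ℝ) (y : E') : (x : ℂ) • y = x • y := by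
  rw [show (x:ℂ) = x • (1:ℂ) by simp [Complex.real_smul], smul_assoc, one_smul]

lemma I_smul_I_smul (y : E') : Complex.I • Complex.I • y = -y := by
  rw [smul_smul, Complex.I_mul_I, neg_one_smul]

lemma csmul_decomp (c : ℂ) (y : E') :
    c • y = c.re • y + c.im • (Complex.I • y) := by
  calc c • y = ((c.re : ℂ) + (c.im : ℂ) * Complex.I) • y := by rw [Complex.re_add_im]
    _ = (c.re : ℂ) • y + ((c.im : ℂ) * Complex.I) • y := add_smul _ _ _
    _ = c.re • y + c.im • (Complex.I • y) := by
        rw [real_smul_eq, mul_smul, real_smul_eq]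

lemma hq_add_right (B : E' →L[ℝ] E' →L[ℝ] ℝ) (x y y' : E') :
    hq B x (y + y') = hq B x y + hq B x y' := by
  simp only [hq, smul_add, map_add]
  push_cast
  ring

lemma hq_add_left (B : E' →L[ℝ] E' →L[ℝ] ℝ) (x x' y : E') :
    hq B (x + x') y = hq B x y + hq B x' y := by
  simp only [hq, smul_add, map_add, ContinuousLinearMap.add_apply]
  push_cast
  ring

lemma hq_zero_right (B : E' →L[ℝ] E' →L[ℝ] ℝ) (x : E') : hq B x 0 = 0 := by
  simp [hq]

lemma hq_real_smul_right (B : E' →L[ℝ] E' →L[ℝ] ℝ) (r : ℝ) (x y : E') :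
    hq B x (r • y) = r * hq B x y := by
  have h1 : Complex.I • r • y = r • Complex.I • y := smul_comm _ _ _
  simp only [hq, h1, _root_.map_smul, ContinuousLinearMap.smul_apply, smul_eq_mul]
  push_cast
  ring

lemma hq_real_smul_left (B : E' →L[ℝ] E' →L[ℝ] ℝ) (r : ℝ) (x y : E') :
    hq B (r • x) y = r * hq B x y := by
  have h1 : Complex.I • r • x = r • Complex.I • x := smul_comm _ _ _
  simp only [hq, h1, _root_.map_smul, ContinuousLinearMap.smul_apply, smul_eq_mul]
  push_cast
  ring

lemma hq_I_smul_right (B : E' →L[ℝ] E' →L[ℝ] ℝ) (x y : E') :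
    hq B x (Complex.I • y) = Complex.I * hq B x y := by
  simp only [hq, I_smul_I_smul, map_neg, ContinuousLinearMap.neg_apply]
  push_cast
  ring_nf
  rw [Complex.I_sq]
  ring

lemma hq_I_smul_left (B : E' →L[ℝ] E' →L[ℝ] ℝ) (x y : E') :
    hq B (Complex.I • x) y = -Complex.I * hq B x y := by
  simp only [hq, I_smul_I_smul, map_neg, ContinuousLinearMap.neg_apply]
  push_cast
  ring_nf
  rw [Complex.I_sq]
  ring

lemma hq_smul_right (B : E' →L[ℝ] E' →L[ℝ] ℝ) (c : ℂ) (x y : E') :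
    hq B x (c • y) = c * hq B x y := by
  rw [csmul_decomp c y, hq_add_right, hq_real_smul_right, hq_real_smul_right, hq_I_smul_right]
  rw [show c = (c.re : ℂ) + (c.im : ℂ) * Complex.I from (Complex.re_add_im c).symm]
  push_cast
  ring_nf
  simp
  ring

lemma hq_smul_left (B : E' →L[ℝ] E' →L[ℝ] ℝ) (c : ℂ) (x y : E') :
    hq B (c • x) y = (starRingEnd ℂ) c * hq B x y := by
  rw [csmul_decomp c x, hq_add_left, hq_real_smul_left, hq_real_smul_left, hq_I_smul_left]
  have hc : (starRingEnd ℂ) c = (c.re:ℂ) - (c.im:ℂ) * Complex.I := by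
    simp [Complex.ext_iff]
  rw [hc]
  ring

end quadform

section quadform2
variable {n : ℕ}
local notation "E'" => EuclideanSpace ℂ (Fin n)

lemma hq_zero_left (B : E' →L[ℝ] E' →L[ℝ] ℝ) (y : E') : hq B 0 y = 0 := by
  simp [hq]

lemma hq_sum_right (B : E' →L[ℝ] E' →L[ℝ] ℝ) (x : E') {ι : Type*} (s : Finset ι) (f : ι → E') :
    hq B x (∑ i ∈ s, f i) = ∑ i ∈ s, hq B x (f i) := by
  classical
  induction s using Finset.induction with
  | empty => simp [hq_zero_right]
  | insert a s hi ih => rw [Finset.sum_insert hi, hq_add_right, ih, Finset.sum_insert hi]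

lemma hq_sum_left (B : E' →L[ℝ] E' →L[ℝ] ℝ) (y : E') {ι : Type*} (s : Finset ι) (f : ι → E') :
    hq B (∑ i ∈ s, f i) y = ∑ i ∈ s, hq B (f i) y := by
  classical
  induction s using Finset.induction with
  | empty => simp [hq_zero_left]
  | insert a s hi ih => rw [Finset.sum_insert hi, hq_add_left, ih, Finset.sum_insert hi]

lemma complexHessian_eq_hq (φ : E' → ℝ) (z : E') (α β : Fin n) :
    complexHessian φ z α β
      = hq (fderiv ℝ (fderiv ℝ φ) z) (EuclideanSpace.single α 1) (EuclideanSpace.single β 1) := by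
  simp only [complexHessian, hq, iteratedFDeriv_two_apply, Matrix.cons_val_zero,
    Matrix.cons_val_one, Matrix.head_cons]

lemma quadform_eq {φ : E' → ℝ} {z : E'} (hφ : ContDiffAt ℝ 2 φ z) (ξ : Fin n → ℂ)
    (w : E') (hw : w = ∑ α, ξ α • (EuclideanSpace.single α (1:ℂ) : E')) :
    dotProduct (star ξ) ((complexHessian φ z).mulVec ξ)
      = (((fderiv ℝ (fderiv ℝ φ) z w w
          + fderiv ℝ (fderiv ℝ φ) z (Complex.I • w) (Complex.I • w)) / 4 : ℝ) : ℂ) := by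
  classical
  set B := fderiv ℝ (fderiv ℝ φ) z with hB
  have hsym : ∀ a b : E', B a b = B b a := hφ.isSymmSndFDerivAt (by simp)
  have step : dotProduct (star ξ) ((complexHessian φ z).mulVec ξ) = hq B w w := by
    rw [hw, hq_sum_left]
    simp only [hq_sum_right]
    rw [dotProduct, Finset.sum_congr rfl (fun α _ => rfl)]
    apply Finset.sum_congr rfl
    intro α _
    rw [Matrix.mulVec, dotProduct, Finset.mul_sum]
    apply Finset.sum_congr rfl
    intro β _
    rw [complexHessian_eq_hq, hq_smul_left, hq_smul_right]
    simp only [Pi.star_apply, Complex.star_def]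
    ring
  rw [step]
  rw [hq]
  rw [hsym (Complex.I • w) w, sub_self]
  push_cast
  simp
end quadform2

lemma fderiv_fderiv_sub {E : Type*} [NormedAddCommGroup E] [NormedSpace ℝ E]
    {u v : E → ℝ} {z : E} (hu : ContDiffAt ℝ 2 u z) (hv : ContDiffAt ℝ 2 v z) :
    fderiv ℝ (fderiv ℝ (fun w => u w - v w)) z
      = fderiv ℝ (fderiv ℝ u) z - fderiv ℝ (fderiv ℝ v) z := by
  have hev : (fderiv ℝ (fun w => u w - v w)) =ᶠ[nhds z]
      (fun w => fderiv ℝ u w - fderiv ℝ v w) := by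
    filter_upwards [hu.eventually (by simp), hv.eventually (by simp)] with w hw1 hw2
    exact fderiv_fun_sub (hw1.differentiableAt two_ne_zero) (hw2.differentiableAt two_ne_zero)
  rw [hev.fderiv_eq]
  exact fderiv_fun_sub ((hu.fderiv_right (m := 1) (by norm_num)).differentiableAt one_ne_zero)
    ((hv.fderiv_right (m := 1) (by norm_num)).differentiableAt one_ne_zero)

lemma complexHessian_sub {n : ℕ} {u v : EuclideanSpace ℂ (Fin n) → ℝ}
    {z : EuclideanSpace ℂ (Fin n)}
    (hu : ContDiffAt ℝ 2 u z) (hv : ContDiffAt ℝ 2 v z) :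
    complexHessian (fun w => u w - v w) z = complexHessian u z - complexHessian v z := by
  ext α β
  simp only [complexHessian, Matrix.sub_apply, iteratedFDeriv_two_apply,
    fderiv_fderiv_sub hu hv, ContinuousLinearMap.sub_apply, Matrix.cons_val_zero,
    Matrix.cons_val_one, Matrix.head_cons]
  push_cast
  ring

lemma bilinear_nonpos_of_localmax {n : ℕ} {φ : EuclideanSpace ℂ (Fin n) → ℝ}
    {z : EuclideanSpace ℂ (Fin n)} (hφ : ContDiffAt ℝ 2 φ z) (hmax : IsLocalMax φ z)
    (w : EuclideanSpace ℂ (Fin n)) : fderiv ℝ (fderiv ℝ φ) z w w ≤ 0 := by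
  rw [← deriv_deriv_line hφ w]
  apply secondDeriv_nonpos_of_isLocalMax
  · have hline : ContDiffAt ℝ 2 (fun t : ℝ => z + t • w) 0 :=
      ContDiff.contDiffAt (contDiff_const.add ((contDiff_id (𝕜 := ℝ) (E := ℝ)).smul contDiff_const))
    have h0 : z + (0:ℝ) • w = z := by simp
    have : ContDiffAt ℝ 2 φ (z + (0:ℝ) • w) := by rw [h0]; exact hφ
    exact ContDiffAt.comp 0 this hline
  · have hcont : Continuous (fun t : ℝ => z + t • w) :=
      continuous_const.add ((continuous_id' : Continuous fun t : ℝ => t).smul continuous_const)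
    have htend : Filter.Tendsto (fun t : ℝ => z + t • w) (nhds 0) (nhds z) := by
      simpa using hcont.tendsto 0
    have hev := htend.eventually hmax
    unfold IsLocalMax IsMaxFilter
    simpa using hev

lemma deriv_nonneg_of_isMaxOn_Icc {ψ : ℝ → ℝ} {t₁ T' d : ℝ} (h0 : 0 < t₁) (hT : t₁ ≤ T')
    (hmax : ∀ s ∈ Icc 0 T', ψ s ≤ ψ t₁) (hd : HasDerivAt ψ d t₁) : 0 ≤ d := by
  have hslope := hasDerivAt_iff_tendsto_slope.mp hd
  have hmono : Filter.Tendsto (slope ψ t₁) (nhdsWithin t₁ (Iio t₁)) (nhds d) :=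
    hslope.mono_left (nhdsWithin_mono _ (fun x hx => ne_of_lt hx))
  apply ge_of_tendsto hmono
  filter_upwards [Ioo_mem_nhdsLT_of_mem (show t₁ ∈ Ioc 0 t₁ from ⟨h0, le_refl _⟩)] with s hs
  have hsmem : s ∈ Icc 0 T' := ⟨hs.1.le, hs.2.le.trans hT⟩
  have hnum : ψ s - ψ t₁ ≤ 0 := sub_nonpos.mpr (hmax s hsmem)
  have hden : s - t₁ < 0 := sub_neg.mpr hs.2
  rw [slope_def_field]
  have := div_nonneg (neg_nonneg.mpr hnum) (neg_nonneg.mpr hden.le)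
  rw [neg_div_neg_eq] at this
  exact this


/-- Comparison principle for the parabolic complex Monge–Ampère equation:
if `u̇ ≤ log det(u_{αβ̄}) − A·u + f` and `v̇ ≥ log det(v_{αβ̄}) − A·v + f` on
`Ω × (0,T)` with `u(·,t)`, `v(·,t)` strictly plurisubharmonic, then
`sup_{Ω×(0,T)} (u − v) ≤ max{0, sup_{∂_P} (u − v)}`. -/
theorem comparison_principle
    (n : ℕ) (Ω : Set (EuclideanSpace ℂ (Fin n)))
    (hΩ_open : IsOpen Ω) (hΩ_conn : IsConnected Ω)
    (hΩ_bdd : Bornology.IsBounded Ω)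
    (A T : ℝ) (hA : 0 ≤ A) (hT : 0 < T)
    (f : EuclideanSpace ℂ (Fin n) × ℝ → ℝ)
    (hf : ContinuousOn f (closure Ω ×ˢ Set.Ico 0 T))
    (u v : EuclideanSpace ℂ (Fin n) × ℝ → ℝ)
    (hu_smooth : ContDiffOn ℝ (⊤ : ℕ∞) u (Ω ×ˢ Set.Ioo 0 T))
    (hu_cont : ContinuousOn u (closure Ω ×ˢ Set.Ico 0 T))
    (hv_smooth : ContDiffOn ℝ (⊤ : ℕ∞) v (Ω ×ˢ Set.Ioo 0 T))
    (hv_cont : ContinuousOn v (closure Ω ×ˢ Set.Ico 0 T))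
    (hu_psh : ∀ z ∈ Ω, ∀ t ∈ Set.Ioo 0 T,
      (complexHessian (fun w => u (w, t)) z).PosDef)
    (hv_psh : ∀ z ∈ Ω, ∀ t ∈ Set.Ioo 0 T,
      (complexHessian (fun w => v (w, t)) z).PosDef)
    (hu_sub : ∀ z ∈ Ω, ∀ t ∈ Set.Ioo 0 T,
      deriv (fun s => u (z, s)) t ≤
        Real.log ((complexHessian (fun w => u (w, t)) z).det.re)
          - A * u (z, t) + f (z, t))
    (hv_sup : ∀ z ∈ Ω, ∀ t ∈ Set.Ioo 0 T,
      deriv (fun s => v (z, s)) t ≥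
        Real.log ((complexHessian (fun w => v (w, t)) z).det.re)
          - A * v (z, t) + f (z, t)) :
    sSup ((fun p => u p - v p) '' (Ω ×ˢ Set.Ioo 0 T)) ≤
      max 0 (sSup ((fun p => u p - v p) '' parabolicBoundary Ω T)) := by
  classical
  by_cases hbdd : BddAbove ((fun p => u p - v p) '' (Ω ×ˢ Set.Ioo 0 T))
  case neg =>
    rw [Real.sSup_of_not_bddAbove hbdd]
    exact le_max_left 0 _
  obtain ⟨b, hb⟩ := hbdd
  have hFcont : ContinuousOn (fun p => u p - v p) (closure Ω ×ˢ Set.Ico 0 T) :=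
    hu_cont.sub hv_cont
  -- values on the lateral boundary are limits of interior values
  have hbd1 : ∀ p ∈ frontier Ω ×ˢ Set.Ioo 0 T, u p - v p ≤ b := by
    rintro ⟨z, t⟩ ⟨hz, ht⟩
    have hzc : z ∈ closure Ω := frontier_subset_closure hz
    have hmemcl : (z, t) ∈ closure Ω ×ˢ Set.Ico 0 T := ⟨hzc, ⟨ht.1.le, ht.2⟩⟩
    have hcw : ContinuousWithinAt (fun p => u p - v p) (Ω ×ˢ Set.Ioo 0 T) (z, t) :=
      (hFcont (z, t) hmemcl).mono (Set.prod_mono subset_closure Set.Ioo_subset_Ico_self)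
    have hclos : (z, t) ∈ closure (Ω ×ˢ Set.Ioo 0 T) := by
      rw [closure_prod_eq]
      exact ⟨hzc, subset_closure ht⟩
    haveI hne : (nhdsWithin (z, t) (Ω ×ˢ Set.Ioo 0 T)).NeBot :=
      mem_closure_iff_nhdsWithin_neBot.mp hclos
    apply le_of_tendsto hcw
    filter_upwards [self_mem_nhdsWithin] with p hp
    exact hb ⟨p, hp, rfl⟩
  have hBb : BddAbove ((fun p => u p - v p) '' parabolicBoundary Ω T) := by
    rw [parabolicBoundary, Set.image_union]
    apply BddAbove.union
    · exact ⟨b, by rintro _ ⟨p, hp, rfl⟩; exact hbd1 p hp⟩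
    · apply IsCompact.bddAbove
      apply IsCompact.image_of_continuousOn
      · exact hΩ_bdd.isCompact_closure.prod isCompact_singleton
      · exact hFcont.mono (Set.prod_mono subset_rfl (by simp [Set.singleton_subset_iff]; exact hT))
  set M := sSup ((fun p => u p - v p) '' parabolicBoundary Ω T) with hM
  have hMle : ∀ p ∈ parabolicBoundary Ω T, u p - v p ≤ M :=
    fun p hp => le_csSup hBb ⟨p, hp, rfl⟩
  apply Real.sSup_le _ (le_max_left 0 _)
  rintro x ⟨⟨z₀, t₀⟩, ⟨hz₀, ht₀⟩, rfl⟩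
  set c := max 0 M with hc
  have hc0 : 0 ≤ c := le_max_left 0 _
  have hMc : M ≤ c := le_max_right 0 _
  set T' := (t₀ + T) / 2 with hT'
  have ht₀T' : t₀ < T' := by simp only [hT']; linarith [ht₀.2]
  have hT'T : T' < T := by simp only [hT']; linarith [ht₀.2, ht₀.1]
  have hT'0 : 0 < T' := by simp only [hT']; linarith [ht₀.1]
  -- key estimate with penalization
  have hkey : ∀ ε : ℝ, 0 < ε → u (z₀, t₀) - v (z₀, t₀) ≤ c + ε * T' := by
    intro ε hε
    set K := closure Ω ×ˢ Set.Icc 0 T' with hK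
    have hKcomp : IsCompact K := hΩ_bdd.isCompact_closure.prod isCompact_Icc
    have hKne : K.Nonempty := ⟨(z₀, 0), subset_closure hz₀, le_refl 0, hT'0.le⟩
    have hKsub : K ⊆ closure Ω ×ˢ Set.Ico 0 T :=
      Set.prod_mono subset_rfl (fun s hs => ⟨hs.1, lt_of_le_of_lt hs.2 hT'T⟩)
    set g : EuclideanSpace ℂ (Fin n) × ℝ → ℝ := fun p => u p - v p - ε * p.2 with hg
    have hgcont : ContinuousOn g K :=
      ((hFcont.mono hKsub)).sub ((continuous_const.mul continuous_snd).continuousOn)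
    obtain ⟨q, hqK, hqmax⟩ := hKcomp.exists_isMaxOn hKne hgcont
    obtain ⟨z₁, t₁⟩ := q
    have hq1 : z₁ ∈ closure Ω := hqK.1
    have hq2 : t₁ ∈ Set.Icc 0 T' := hqK.2
    have hmaxval : ∀ p ∈ K, g p ≤ g (z₁, t₁) := fun p hp => hqmax hp
    have hg₀ : g (z₀, t₀) ≤ g (z₁, t₁) :=
      hmaxval (z₀, t₀) ⟨subset_closure hz₀, ht₀.1.le, ht₀T'.le⟩
    suffices hgq : g (z₁, t₁) ≤ c by
      have h1 : u (z₀, t₀) - v (z₀, t₀) - ε * t₀ ≤ c := le_trans hg₀ hgq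
      nlinarith [ht₀.1, ht₀T']
    by_cases ht1 : t₁ = 0
    · subst ht1
      have hmem : ((z₁, (0:ℝ)) : EuclideanSpace ℂ (Fin n) × ℝ) ∈ parabolicBoundary Ω T :=
        Or.inr ⟨hq1, rfl⟩
      have := hMle _ hmem
      simp only [hg]
      simp only [mul_zero]
      linarith [hMc, this]
    have ht1pos : 0 < t₁ := lt_of_le_of_ne hq2.1 (Ne.symm ht1)
    have ht1T : t₁ ∈ Set.Ioo 0 T := ⟨ht1pos, lt_of_le_of_lt hq2.2 hT'T⟩
    by_cases hz1 : z₁ ∈ Ω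
    case neg =>
      have hfr : z₁ ∈ frontier Ω := by
        rw [frontier, hΩ_open.interior_eq]
        exact ⟨hq1, hz1⟩
      have hmem : ((z₁, t₁) : EuclideanSpace ℂ (Fin n) × ℝ) ∈ parabolicBoundary Ω T :=
        Or.inl ⟨hfr, ht1T⟩
      have h2 := hMle _ hmem
      have h3 : 0 < ε * t₁ := mul_pos hε ht1pos
      simp only [hg]
      linarith [hMc]
    -- main case: interior maximum
    case pos =>
      have hmemΩ : ((z₁, t₁) : EuclideanSpace ℂ (Fin n) × ℝ) ∈ Ω ×ˢ Set.Ioo 0 T := ⟨hz1, ht1T⟩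
      have hopen : IsOpen (Ω ×ˢ Set.Ioo 0 T) := hΩ_open.prod isOpen_Ioo
      have huC : ContDiffAt ℝ 2 u (z₁, t₁) :=
        (hu_smooth.contDiffAt (hopen.mem_nhds hmemΩ)).of_le (by exact WithTop.coe_le_coe.mpr le_top)
      have hvC : ContDiffAt ℝ 2 v (z₁, t₁) :=
        (hv_smooth.contDiffAt (hopen.mem_nhds hmemΩ)).of_le (by exact WithTop.coe_le_coe.mpr le_top)
      have hι : ContDiffAt ℝ 2 (fun w : EuclideanSpace ℂ (Fin n) => (w, t₁)) z₁ :=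
        (contDiff_id.prodMk contDiff_const).contDiffAt
      have hu2 : ContDiffAt ℝ 2 (fun w => u (w, t₁)) z₁ := huC.comp z₁ hι
      have hv2 : ContDiffAt ℝ 2 (fun w => v (w, t₁)) z₁ := hvC.comp z₁ hι
      have hφ2 : ContDiffAt ℝ 2 (fun w => u (w, t₁) - v (w, t₁)) z₁ := hu2.sub hv2
      -- local max in space
      have hmaxφ : IsLocalMax (fun w => u (w, t₁) - v (w, t₁)) z₁ := by
        filter_upwards [hΩ_open.mem_nhds hz1] with w hw
        have h4 := hmaxval (w, t₁) ⟨subset_closure hw, ht1pos.le, hq2.2⟩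
        simp only [hg] at h4 ⊢
        linarith [h4]
      have hBneg := fun w => bilinear_nonpos_of_localmax hφ2 hmaxφ w
      set Hu := complexHessian (fun w => u (w, t₁)) z₁ with hHu_def
      set Hv := complexHessian (fun w => v (w, t₁)) z₁ with hHv_def
      have hHu : Hu.PosDef := hu_psh z₁ hz1 t₁ ht1T
      have hHv : Hv.PosDef := hv_psh z₁ hz1 t₁ ht1T
      have hsubH : complexHessian (fun w => u (w, t₁) - v (w, t₁)) z₁ = Hu - Hv :=
        complexHessian_sub hu2 hv2
      have hPSD : (Hv - Hu).PosSemidef := by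
        refine .of_dotProduct_mulVec_nonneg (hHv.1.sub hHu.1) ?_
        intro ξ
        have hquad := quadform_eq hφ2 ξ
          (∑ α, ξ α • (EuclideanSpace.single α (1:ℂ) : EuclideanSpace ℂ (Fin n))) rfl
        rw [hsubH] at hquad
        have hneg : Hv - Hu = -(Hu - Hv) := by rw [neg_sub]
        rw [hneg, Matrix.neg_mulVec, dotProduct_neg, hquad]
        set w := ∑ α, ξ α • (EuclideanSpace.single α (1:ℂ) : EuclideanSpace ℂ (Fin n))
        set B := fderiv ℝ (fderiv ℝ (fun w => u (w, t₁) - v (w, t₁))) z₁ with hB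
        have hr : (B w w + B (Complex.I • w) (Complex.I • w)) / 4 ≤ 0 := by
          have := hBneg w
          have := hBneg (Complex.I • w)
          rw [← hB] at *
          linarith
        rw [← Complex.ofReal_neg]
        rw [Complex.le_def]
        constructor
        · simpa using hr
        · simp
      have hdet : Hu.det.re ≤ Hv.det.re := det_re_le_det_re_of_posSemidef_sub hHu hPSD
      have hupos : 0 < Hu.det.re := by
        have := hHu.det_pos
        rw [Complex.lt_def] at this
        simpa using this.1
      have hlog : Real.log Hu.det.re ≤ Real.log Hv.det.re := Real.log_le_log hupos hdet
      -- time derivative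
      have hudiff : DifferentiableAt ℝ u (z₁, t₁) := huC.differentiableAt two_ne_zero
      have hvdiff : DifferentiableAt ℝ v (z₁, t₁) := hvC.differentiableAt two_ne_zero
      have hκ : DifferentiableAt ℝ (fun s : ℝ => ((z₁, s) : EuclideanSpace ℂ (Fin n) × ℝ)) t₁ :=
        (differentiableAt_const z₁).prodMk differentiableAt_id
      have hds : DifferentiableAt ℝ (fun s => u (z₁, s)) t₁ := hudiff.comp t₁ hκ
      have hdsv : DifferentiableAt ℝ (fun s => v (z₁, s)) t₁ := hvdiff.comp t₁ hκ
      set du := deriv (fun s => u (z₁, s)) t₁ with hdu_def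
      set dv := deriv (fun s => v (z₁, s)) t₁ with hdv_def
      have hεlin : HasDerivAt (fun s : ℝ => ε * s) ε t₁ := by
        simpa using (hasDerivAt_id t₁).const_mul ε
      have hdψ : HasDerivAt (fun s => u (z₁, s) - v (z₁, s) - ε * s) (du - dv - ε) t₁ :=
        (hds.hasDerivAt.sub hdsv.hasDerivAt).sub hεlin
      have hψmax : ∀ s ∈ Set.Icc 0 T', u (z₁, s) - v (z₁, s) - ε * s
          ≤ u (z₁, t₁) - v (z₁, t₁) - ε * t₁ := by
        intro s hs
        have := hmaxval (z₁, s) ⟨hq1, hs⟩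
        simpa [hg] using this
      have hψmax' : ∀ s ∈ Set.Icc 0 T', (fun s => u (z₁, s) - v (z₁, s) - ε * s) s
          ≤ (fun s => u (z₁, s) - v (z₁, s) - ε * s) t₁ := hψmax
      have hder := deriv_nonneg_of_isMaxOn_Icc ht1pos hq2.2 hψmax' hdψ
      -- PDE inequalities
      have h1 := hu_sub z₁ hz1 t₁ ht1T
      have h2 := hv_sup z₁ hz1 t₁ ht1T
      rw [← hHu_def] at h1
      rw [← hHv_def] at h2
      rw [← hdu_def] at h1
      rw [← hdv_def] at h2
      have hεle : ε ≤ -(A * (u (z₁, t₁) - v (z₁, t₁))) := by nlinarith [hlog]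
      have hdlt : u (z₁, t₁) - v (z₁, t₁) < 0 := by
        by_contra hge
        push_neg at hge
        nlinarith [mul_nonneg hA hge]
      have h3 : 0 < ε * t₁ := mul_pos hε ht1pos
      simp only [hg]
      linarith
  -- let ε → 0
  apply le_of_forall_pos_le_add
  intro δ hδ
  have := hkey (δ / T') (div_pos hδ hT'0)
  rwa [div_mul_cancel₀ δ hT'0.ne'] at this
end

section
/- Let Ω ⊆ ℂⁿ be open and let (g_j)_{j≥1} be a sequence of holomorphic functions on Ω such that the series Σ_{j=1}^{∞} |g_j(z)|² converges for every z ∈ Ω and its sum is bounded on every compact subset of Ω. Let Ω' = {w ∈ ℂⁿ : w̄ ∈ Ω} and for each j define f_j : Ω × Ω' → ℂ by f_j(z,w) = g_j(z) · conj(g_j(w̄)). Then each f_j is holomorphic on Ω × Ω', the series Σ_{j=1}^{∞} f_j converges uniformly on every compact subset of Ω × Ω', and the sum F is holomorphic on Ω × Ω' and satisfies F(z, z̄) = Σ_{j=1}^{∞} |g_j(z)|² for every z ∈ Ω. -/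
open Set Filter

/-- Coordinatewise complex conjugation `w ↦ w̄` on `ℂⁿ`. -/
noncomputable def conjVec {n : ℕ} (w : EuclideanSpace ℂ (Fin n)) : EuclideanSpace ℂ (Fin n) :=
  (WithLp.equiv 2 (Fin n → ℂ)).symm fun i => starRingEnd ℂ (w i)

/-!
The partial sums of `Σ f_j` are holomorphic on `Ω × Ω'`, and `|a b̄| ≤ (|a|² + |b|²)/2` bounds
them on compacts by the local bounds of `Σ |g_j|²`. By the Schwarz lemma a locally bounded family
of holomorphic maps is equicontinuous, so (Ascoli) pointwise convergence is uniform on compacts.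
The same Cauchy estimate applied to differences of partial sums shows that their derivatives
converge locally uniformly as well, so the limit is holomorphic; on `w = z̄` each `f_j` is `|g_j|²`.
-/

open Metric Topology

theorem IsCompact.tendstoUniformlyOn_of_equicontinuousOn {ι X α : Type*} [TopologicalSpace X]
    [UniformSpace α] {F : ι → X → α} {f : X → α} {K : Set X} {l : Filter ι}
    (hK : IsCompact K) (hF : EquicontinuousOn F K)
    (h : ∀ x ∈ K, Tendsto (F · x) l (𝓝 (f x))) : TendstoUniformlyOn F f l K := by
  have : CompactSpace K := isCompact_iff_compactSpace.mp hK
  rw [tendstoUniformlyOn_iff_tendstoUniformly_comp_coe]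
  refine UniformFun.tendsto_iff_tendstoUniformly.1
    ((((equicontinuous_restrict_iff F).2 hF).tendsto_uniformFun_iff_pi l _).2 ?_)
  exact tendsto_pi_nhds.2 fun x => h x x.2

theorem mapsTo_ball_closedBall_of_norm_le {E F : Type*} [PseudoMetricSpace E]
    [SeminormedAddCommGroup F] {f : E → F} {c : E} {R C : ℝ} (hR : 0 < R)
    (hb : ∀ y ∈ ball c R, ‖f y‖ ≤ C) : MapsTo f (ball c R) (closedBall (f c) (2 * C)) := by
  intro y hy
  rw [mem_closedBall, dist_eq_norm]
  linarith [norm_sub_le (f y) (f c), hb y hy, hb c (mem_ball_self hR)]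

variable {E F : Type*} [NormedAddCommGroup E] [NormedSpace ℂ E]
  [NormedAddCommGroup F] [NormedSpace ℂ F]

namespace Complex

variable {f : E → F} {c z : E} {R C : ℝ}

theorem dist_le_mul_dist_of_norm_le_on_ball (hd : DifferentiableOn ℂ f (ball c R))
    (hb : ∀ y ∈ ball c R, ‖f y‖ ≤ C) (hz : z ∈ ball c R) :
    dist (f z) (f c) ≤ 2 * C / R * dist z c :=
  dist_le_div_mul_dist_of_mapsTo_ball hd
    (mapsTo_ball_closedBall_of_norm_le (nonempty_ball.mp ⟨z, hz⟩) hb) hz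

theorem norm_fderiv_le_of_norm_le_on_ball (hd : DifferentiableOn ℂ f (ball c R))
    (hb : ∀ y ∈ ball c R, ‖f y‖ ≤ C) (hR : 0 < R) : ‖fderiv ℂ f c‖ ≤ 2 * C / R :=
  norm_fderiv_le_div_of_mapsTo_ball hd (mapsTo_ball_closedBall_of_norm_le hR hb) hR

theorem equicontinuousAt_of_norm_le_on_ball {ι : Type*} {f : ι → E → F} (hR : 0 < R)
    (hd : ∀ i, DifferentiableOn ℂ (f i) (ball c R)) (hb : ∀ i, ∀ y ∈ ball c R, ‖f i y‖ ≤ C) :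
    EquicontinuousAt f c := by
  refine Metric.equicontinuousAt_of_continuity_modulus (fun z => 2 * C / R * dist z c) ?_ f ?_
  · exact (continuous_const.mul (continuous_id.dist continuous_const)).tendsto' c 0 (by simp)
  · filter_upwards [ball_mem_nhds c hR] with z hz i
    rw [dist_comm]
    exact dist_le_mul_dist_of_norm_le_on_ball (hd i) (hb i) hz

theorem tendstoLocallyUniformlyOn_of_tendsto_of_bounded [ProperSpace E] {ι : Type*}
    {l : Filter ι} {f : ι → E → F} {g : E → F} {U : Set E} (hU : IsOpen U)
    (hd : ∀ i, DifferentiableOn ℂ (f i) U)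
    (hb : ∀ K ⊆ U, IsCompact K → ∃ C, ∀ i, ∀ y ∈ K, ‖f i y‖ ≤ C)
    (hf : ∀ x ∈ U, Tendsto (f · x) l (𝓝 (g x))) : TendstoLocallyUniformlyOn f g l U := by
  rw [tendstoLocallyUniformlyOn_iff_forall_isCompact hU]
  intro K hKU hK
  refine hK.tendstoUniformlyOn_of_equicontinuousOn (fun x hx => ?_) fun x hx => hf x (hKU hx)
  obtain ⟨R, hR, hRU⟩ := nhds_basis_closedBall.mem_iff.1 (hU.mem_nhds (hKU hx))
  obtain ⟨C, hC⟩ := hb _ hRU (isCompact_closedBall x R)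
  refine (equicontinuousAt_of_norm_le_on_ball hR (fun i => (hd i).mono ?_)
    fun i y hy => hC i y (ball_subset_closedBall hy)).equicontinuousWithinAt K
  exact ball_subset_closedBall.trans hRU

theorem uniformCauchySeqOn_fderiv {ι : Type*} {l : Filter ι} {f : ι → E → F} {x : E} {r : ℝ}
    (hd : ∀ i, DifferentiableOn ℂ (f i) (ball x (2 * r)))
    (hf : UniformCauchySeqOn f l (ball x (2 * r))) :
    UniformCauchySeqOn (fun i => fderiv ℂ (f i)) l (ball x r) := by
  rw [SeminormedAddGroup.uniformCauchySeqOn_iff_tendstoUniformlyOn_zero,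
    Metric.tendstoUniformlyOn_iff] at hf ⊢
  intro ε hε
  by_cases hr : 0 < r
  swap
  · exact Eventually.of_forall fun _ y hy => absurd (pos_of_mem_ball hy) hr
  filter_upwards [hf (ε * r / 4) (by positivity)] with n hn y hy
  have hsub : ball y r ⊆ ball x (2 * r) := ball_subset_ball' (by linarith [mem_ball.1 hy])
  have hdiff : ∀ i, DifferentiableAt ℂ (f i) y := fun i =>
    (hd i).differentiableAt (isOpen_ball.mem_nhds (hsub (mem_ball_self hr)))
  have hbound := norm_fderiv_le_of_norm_le_on_ball (f := -f n.1 + f n.2)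
    (((hd n.1).neg.add (hd n.2)).mono hsub)
    (fun z hz => by simpa using (hn z (hsub hz)).le) hr
  rw [fderiv_add (hdiff n.1).neg (hdiff n.2), fderiv_neg] at hbound
  simp only [Pi.zero_apply, dist_zero_left]
  calc _ ≤ 2 * (ε * r / 4) / r := hbound
    _ < ε := by field_simp; linarith

theorem differentiableOn_of_tendstoLocallyUniformlyOn [ProperSpace E] [CompleteSpace F]
    {ι : Type*} {l : Filter ι} [l.NeBot] {f : ι → E → F} {g : E → F} {U : Set E}
    (hU : IsOpen U) (hf : TendstoLocallyUniformlyOn f g l U)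
    (hd : ∀ i, DifferentiableOn ℂ (f i) U) : DifferentiableOn ℂ g U := by
  intro x hx
  obtain ⟨r, hr, hrU⟩ : ∃ r > 0, closedBall x (2 * r) ⊆ U := by
    obtain ⟨R, hR, hRU⟩ := nhds_basis_closedBall.mem_iff.1 (hU.mem_nhds hx)
    exact ⟨R / 2, by positivity, by rwa [mul_div_cancel₀ _ two_ne_zero]⟩
  have hball : ball x r ⊆ U :=
    (ball_subset_ball (by linarith)).trans (ball_subset_closedBall.trans hrU)
  have hcauchy : UniformCauchySeqOn (fun i => fderiv ℂ (f i)) l (ball x r) :=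
    uniformCauchySeqOn_fderiv (fun i => (hd i).mono (ball_subset_closedBall.trans hrU))
      ((((tendstoLocallyUniformlyOn_iff_forall_isCompact hU).1 hf _ hrU
        (isCompact_closedBall _ _)).uniformCauchySeqOn).mono ball_subset_closedBall)
  have hlim : ∀ y ∈ ball x r, Tendsto (fun i => fderiv ℂ (f i) y) l
      (𝓝 (limUnder l fun i => fderiv ℂ (f i) y)) := fun y hy =>
    tendsto_nhds_limUnder (cauchy_map_iff_exists_tendsto.1 (hcauchy.cauchy_map hy))
  have hg : HasFDerivAt g (limUnder l fun i => fderiv ℂ (f i) x) x :=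
    hasFDerivAt_of_tendstoUniformlyOn isOpen_ball (hcauchy.tendstoUniformlyOn_of_tendsto hlim)
      (fun i y hy => ((hd i).differentiableAt (hU.mem_nhds (hball hy))).hasFDerivAt)
      (fun y hy => hf.tendsto_at (hball hy)) (mem_ball_self hr)
  exact hg.differentiableAt.differentiableWithinAt

end Complex

open ComplexConjugate

section Polarization

variable {n : ℕ}

/-- `conjVec`, bundled as a conjugate-linear continuous map (the two agree definitionally). -/
noncomputable def conjVecCLM (n : ℕ) :
    EuclideanSpace ℂ (Fin n) →L⋆[ℂ] EuclideanSpace ℂ (Fin n) :=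
  (EuclideanSpace.equiv (Fin n) ℂ).symm.toContinuousLinearMap ∘SL
    ((starL ℂ : (Fin n → ℂ) ≃L⋆[ℂ] (Fin n → ℂ)).toContinuousLinearMap ∘SL
      (EuclideanSpace.equiv (Fin n) ℂ).toContinuousLinearMap)

theorem continuous_conjVec : Continuous (conjVec : EuclideanSpace ℂ (Fin n) → _) :=
  (conjVecCLM n).continuous

theorem conjVec_conjVec (w : EuclideanSpace ℂ (Fin n)) : conjVec (conjVec w) = w := by
  ext i
  simp [conjVec]

theorem DifferentiableOn.conj_comp_conjVec {u : EuclideanSpace ℂ (Fin n) → ℂ}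
    {Ω : Set (EuclideanSpace ℂ (Fin n))} (hu : DifferentiableOn ℂ u Ω) (hΩ : IsOpen Ω) :
    DifferentiableOn ℂ (fun w => conj (u (conjVec w))) {w | conjVec w ∈ Ω} := fun _ hw =>
  ((hu.differentiableAt (hΩ.mem_nhds hw)).comp_semilinear₂
    (starL ℂ : ℂ ≃L⋆[ℂ] ℂ).toContinuousLinearMap (conjVecCLM n)).differentiableWithinAt

/-- The paper's `f_j(z, w) = g_j(z) · conj(g_j(w̄))`, for `u = g_j`. -/
noncomputable def polarization (u : EuclideanSpace ℂ (Fin n) → ℂ)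
    (p : EuclideanSpace ℂ (Fin n) × EuclideanSpace ℂ (Fin n)) : ℂ :=
  u p.1 * conj (u (conjVec p.2))

theorem DifferentiableOn.polarization {u : EuclideanSpace ℂ (Fin n) → ℂ}
    {Ω : Set (EuclideanSpace ℂ (Fin n))} (hu : DifferentiableOn ℂ u Ω) (hΩ : IsOpen Ω) :
    DifferentiableOn ℂ (polarization u) (Ω ×ˢ {w | conjVec w ∈ Ω}) :=
  (hu.comp differentiableOn_fst fun _ hp => hp.1).mul
    ((hu.conj_comp_conjVec hΩ).comp differentiableOn_snd fun _ hp => hp.2)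

theorem polarization_apply_conjVec (u : EuclideanSpace ℂ (Fin n) → ℂ)
    (z : EuclideanSpace ℂ (Fin n)) : polarization u (z, conjVec z) = (‖u z‖ ^ 2 : ℝ) := by
  simp [polarization, conjVec_conjVec, Complex.mul_conj']

theorem norm_polarization_le (u : EuclideanSpace ℂ (Fin n) → ℂ)
    (p : EuclideanSpace ℂ (Fin n) × EuclideanSpace ℂ (Fin n)) :
    ‖polarization u p‖ ≤ (‖u p.1‖ ^ 2 + ‖u (conjVec p.2)‖ ^ 2) / 2 := by
  rw [polarization, norm_mul, Complex.norm_conj]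
  nlinarith [two_mul_le_add_sq ‖u p.1‖ ‖u (conjVec p.2)‖]

variable {ι : Type*} {g : ι → EuclideanSpace ℂ (Fin n) → ℂ}
  {p : EuclideanSpace ℂ (Fin n) × EuclideanSpace ℂ (Fin n)}

theorem summable_polarization (h₁ : Summable fun j => ‖g j p.1‖ ^ 2)
    (h₂ : Summable fun j => ‖g j (conjVec p.2)‖ ^ 2) :
    Summable fun j => polarization (g j) p :=
  Summable.of_norm_bounded ((h₁.add h₂).div_const 2) fun j => norm_polarization_le (g j) p

theorem norm_sum_polarization_le (h₁ : Summable fun j => ‖g j p.1‖ ^ 2)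
    (h₂ : Summable fun j => ‖g j (conjVec p.2)‖ ^ 2) (s : Finset ι) :
    ‖∑ j ∈ s, polarization (g j) p‖ ≤
      (∑' j, ‖g j p.1‖ ^ 2 + ∑' j, ‖g j (conjVec p.2)‖ ^ 2) / 2 :=
  calc ‖∑ j ∈ s, polarization (g j) p‖
      ≤ ∑ j ∈ s, (‖g j p.1‖ ^ 2 + ‖g j (conjVec p.2)‖ ^ 2) / 2 :=
        (norm_sum_le _ _).trans (Finset.sum_le_sum fun j _ => norm_polarization_le (g j) p)
    _ = (∑ j ∈ s, ‖g j p.1‖ ^ 2 + ∑ j ∈ s, ‖g j (conjVec p.2)‖ ^ 2) / 2 := by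
        rw [← Finset.sum_div, Finset.sum_add_distrib]
    _ ≤ _ := by
        gcongr
        · exact h₁.sum_le_tsum s fun _ _ => by positivity
        · exact h₂.sum_le_tsum s fun _ _ => by positivity

theorem exists_bound_sum_polarization {Ω : Set (EuclideanSpace ℂ (Fin n))}
    (hsum : ∀ z ∈ Ω, Summable fun j => ‖g j z‖ ^ 2)
    (hbdd : ∀ K ⊆ Ω, IsCompact K → ∃ C : ℝ, ∀ z ∈ K, ∑' j, ‖g j z‖ ^ 2 ≤ C)
    {L : Set (EuclideanSpace ℂ (Fin n) × EuclideanSpace ℂ (Fin n))}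
    (hL : L ⊆ Ω ×ˢ {w | conjVec w ∈ Ω}) (hLc : IsCompact L) :
    ∃ C, ∀ s : Finset ι, ∀ p ∈ L, ‖∑ j ∈ s, polarization (g j) p‖ ≤ C := by
  obtain ⟨C₁, hC₁⟩ := hbdd (Prod.fst '' L) (image_subset_iff.2 fun _ hp => (hL hp).1)
    (hLc.image continuous_fst)
  obtain ⟨C₂, hC₂⟩ := hbdd ((fun p : _ × _ => conjVec p.2) '' L)
    (image_subset_iff.2 fun _ hp => (hL hp).2) (hLc.image (continuous_conjVec.comp continuous_snd))
  refine ⟨(C₁ + C₂) / 2, fun s p hp => ?_⟩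
  have := norm_sum_polarization_le (hsum _ (hL hp).1) (hsum _ (hL hp).2) s
  linarith [hC₁ _ (mem_image_of_mem _ hp), hC₂ _ (mem_image_of_mem _ hp)]

end Polarization

/-- If `(g_j)` are holomorphic on `Ω ⊆ ℂⁿ` with `Σ |g_j(z)|²` pointwise
convergent and locally bounded, then the functions
`f_j(z,w) = g_j(z)·conj(g_j(w̄))` are holomorphic on `Ω × Ω'`
(where `Ω' = {w : w̄ ∈ Ω}`), the series `Σ f_j` converges uniformly on
compact subsets of `Ω × Ω'` to a holomorphic function `F`, and
`F(z, z̄) = Σ |g_j(z)|²` on `Ω`. -/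
theorem diagonal_holomorphic_extension
    (n : ℕ) (Ω : Set (EuclideanSpace ℂ (Fin n))) (hΩ : IsOpen Ω)
    (g : ℕ → EuclideanSpace ℂ (Fin n) → ℂ)
    (hg : ∀ j, DifferentiableOn ℂ (g j) Ω)
    (hsum : ∀ z ∈ Ω, Summable fun j => ‖g j z‖ ^ 2)
    (hbdd : ∀ K ⊆ Ω, IsCompact K → ∃ C : ℝ, ∀ z ∈ K, ∑' j, ‖g j z‖ ^ 2 ≤ C) :
    ∃ F : EuclideanSpace ℂ (Fin n) × EuclideanSpace ℂ (Fin n) → ℂ,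
      (∀ j, DifferentiableOn ℂ
        (fun p : EuclideanSpace ℂ (Fin n) × EuclideanSpace ℂ (Fin n) =>
          g j p.1 * starRingEnd ℂ (g j (conjVec p.2)))
        (Ω ×ˢ {w | conjVec w ∈ Ω})) ∧
      (∀ K ⊆ Ω ×ˢ {w | conjVec w ∈ Ω}, IsCompact K →
        TendstoUniformlyOn
          (fun N p => ∑ j ∈ Finset.range N,
            g j p.1 * starRingEnd ℂ (g j (conjVec p.2)))
          F atTop K) ∧
      DifferentiableOn ℂ F (Ω ×ˢ {w | conjVec w ∈ Ω}) ∧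
      ∀ z ∈ Ω, F (z, conjVec z) = ((∑' j, ‖g j z‖ ^ 2 : ℝ) : ℂ) := by
  have hD : IsOpen (Ω ×ˢ {w | conjVec w ∈ Ω}) := hΩ.prod (hΩ.preimage continuous_conjVec)
  have hpartial : ∀ N, DifferentiableOn ℂ (fun p => ∑ j ∈ Finset.range N, polarization (g j) p)
      (Ω ×ˢ {w | conjVec w ∈ Ω}) := fun N =>
    DifferentiableOn.fun_sum fun j _ => (hg j).polarization hΩ
  have hconv : TendstoLocallyUniformlyOn
      (fun N p => ∑ j ∈ Finset.range N, polarization (g j) p)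
      (fun p => ∑' j, polarization (g j) p) atTop (Ω ×ˢ {w | conjVec w ∈ Ω}) :=
    Complex.tendstoLocallyUniformlyOn_of_tendsto_of_bounded hD hpartial
      (fun K hK hKc => (exists_bound_sum_polarization hsum hbdd hK hKc).imp
        fun _ hC N => hC (Finset.range N))
      (fun p hp => (summable_polarization (hsum _ hp.1) (hsum _ hp.2)).hasSum.tendsto_sum_nat)
  refine ⟨fun p => ∑' j, polarization (g j) p, fun j => (hg j).polarization hΩ,
    (tendstoLocallyUniformlyOn_iff_forall_isCompact hD).1 hconv,
    Complex.differentiableOn_of_tendstoLocallyUniformlyOn hD hconv hpartial, fun z _ => ?_⟩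
  simp only [polarization_apply_conjVec, Complex.ofReal_tsum]
end

section
/- Let Ω be a bounded domain in ℂⁿ and T > 0. Let f : [0,T) × Ω̄ × ℝ → ℝ be continuous and non-increasing in its last variable. Suppose u, v ∈ C^∞(Ω × (0,T)) ∩ C(Ω̄ × [0,T)) are real-valued, for every t ∈ (0,T) the complex Hessians of u(·,t) and v(·,t) are positive definite at every point of Ω, and both satisfy the equation ∂w/∂t = log det(w_{αβ̄}) + f(t,z,w) on Ω × (0,T). If u = v on ∂Ω × (0,T) and u(·,0) = v(·,0) on Ω̄, then u = v on Ω̄ × [0,T). -/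
open Set Metric Complex ComplexOrder

open Matrix

/-- det(1+C) ≥ 1 for C PSD. -/
lemma det_one_add_posSemidef {m : ℕ} {C : Matrix (Fin m) (Fin m) ℂ}
    (hC : C.PosSemidef) : (1 : ℂ) ≤ (1 + C).det := by
  have hH := hC.1
  have hspec := hH.spectral_theorem
  set U := hH.eigenvectorUnitary
  have hU : (U : Matrix (Fin m) (Fin m) ℂ) * (star (U : Matrix (Fin m) (Fin m) ℂ)) = 1 :=
    Matrix.mem_unitaryGroup_iff.mp U.2
  have h1 : (1 : Matrix (Fin m) (Fin m) ℂ) + C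
      = (U : Matrix (Fin m) (Fin m) ℂ) *
        (1 + Matrix.diagonal (RCLike.ofReal ∘ hH.eigenvalues)) * (star (U : Matrix (Fin m) (Fin m) ℂ)) := by
    rw [Matrix.mul_add, Matrix.add_mul, Matrix.mul_one, hU]
    conv_lhs => rw [hspec, Unitary.conjStarAlgAut_apply]
  have hdet : (1 + C).det = ((1 : Matrix (Fin m) (Fin m) ℂ) + Matrix.diagonal (RCLike.ofReal ∘ hH.eigenvalues)).det := by
    rw [h1, Matrix.det_mul, Matrix.det_mul, mul_comm ((U : Matrix (Fin m) (Fin m) ℂ)).det,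
      mul_assoc, ← Matrix.det_mul, hU, Matrix.det_one, mul_one]
  rw [hdet, ← Matrix.diagonal_one, Matrix.diagonal_add, Matrix.det_diagonal]
  have : ∀ i, ((1 : ℂ) ≤ (1 : Fin m → ℂ) i + (RCLike.ofReal ∘ hH.eigenvalues) i) := by
    intro i
    have h0 : (0:ℝ) ≤ hH.eigenvalues i := hC.eigenvalues_nonneg i
    have h1 : ((1:ℝ):ℂ) ≤ ((1 + hH.eigenvalues i : ℝ) : ℂ) := by
      rw [Complex.real_le_real]; linarith
    simpa using h1
  calc (1:ℂ) = ∏ i : Fin m, 1 := by simp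
  _ ≤ ∏ i, ((1 : Fin m → ℂ) i + (RCLike.ofReal ∘ hH.eigenvalues) i) := by
      apply Finset.prod_le_prod
      · intro i _; exact zero_le_one
      · intro i _; simpa using this i

open scoped MatrixOrder in
lemma det_re_mono {m : ℕ} {A B : Matrix (Fin m) (Fin m) ℂ}
    (hA : A.PosDef) (hD : (B - A).PosSemidef) : A.det.re ≤ B.det.re := by
  classical
  set S := CFC.sqrt A with hSdef
  have hS : S.PosSemidef := (CFC.sqrt_nonneg A).posSemidef
  have hSS : S * S = A := CFC.sqrt_mul_sqrt_self A hA.posSemidef.nonneg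
  have hdetA : (0:ℂ) < A.det := hA.det_pos
  have hdetS : S.det ≠ 0 := by
    intro h
    rw [← hSS, Matrix.det_mul, h, mul_zero] at hdetA
    exact lt_irrefl _ hdetA
  have hunit : IsUnit S.det := isUnit_iff_ne_zero.mpr hdetS
  have hinv1 : S * S⁻¹ = 1 := Matrix.mul_nonsing_inv S hunit
  have hinv2 : S⁻¹ * S = 1 := Matrix.nonsing_inv_mul S hunit
  have hSiH : (S⁻¹).IsHermitian := hS.1.inv
  set C := S⁻¹ * (B - A) * S⁻¹ with hCdef
  have hC : C.PosSemidef := by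
    have := hD.conjTranspose_mul_mul_same (S⁻¹)
    rwa [hSiH.eq] at this
  have hBfact : B = S * (1 + C) * S := by
    have h1 : S * (1 + C) * S = S * S + S * C * S := by
      rw [Matrix.mul_add, Matrix.mul_one, Matrix.add_mul]
    have h2 : S * C * S = B - A := by
      rw [hCdef]
      calc S * (S⁻¹ * (B - A) * S⁻¹) * S
          = (S * S⁻¹) * (B - A) * (S⁻¹ * S) := by
            simp only [Matrix.mul_assoc]
        _ = B - A := by rw [hinv1, hinv2, Matrix.one_mul, Matrix.mul_one]
    rw [h1, h2, hSS]
    abel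
  have hdetB : B.det = A.det * (1 + C).det := by
    rw [hBfact, Matrix.det_mul, Matrix.det_mul, ← hSS, Matrix.det_mul]
    ring
  have hle : A.det ≤ B.det := by
    rw [hdetB]
    calc A.det = A.det * 1 := (mul_one _).symm
      _ ≤ A.det * (1 + C).det :=
        mul_le_mul_of_nonneg_left (det_one_add_posSemidef hC) hdetA.le
  exact (Complex.le_def.mp hle).1

section quadform
variable {n : ℕ}

/-- Expansion of the quadratic form of a 2-multilinear map over a finite family. -/
lemma multilinear_expand (F : ContinuousMultilinearMap ℝ (fun _ : Fin 2 => EuclideanSpace ℂ (Fin n)) ℝ)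
    (c : Fin n × Bool → ℝ) (vec : Fin n × Bool → EuclideanSpace ℂ (Fin n)) :
    F ![∑ j, c j • vec j, ∑ j, c j • vec j]
      = ∑ j0 : Fin n × Bool, ∑ j1 : Fin n × Bool, c j0 * c j1 * F ![vec j0, vec j1] := by
  classical
  have h1 : (![∑ j, c j • vec j, ∑ j, c j • vec j] : Fin 2 → EuclideanSpace ℂ (Fin n))
      = fun _ : Fin 2 => ∑ j : Fin n × Bool, c j • vec j := by
    funext i; fin_cases i <;> rfl
  rw [h1]
  change F.toMultilinearMap (fun _ : Fin 2 => ∑ j : Fin n × Bool, c j • vec j) = _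
  rw [F.toMultilinearMap.map_sum (g := fun _ j => c j • vec j)]
  have h2 : ∀ r : Fin 2 → Fin n × Bool,
      F.toMultilinearMap (fun i => c (r i) • vec (r i))
        = c (r 0) * c (r 1) * F ![vec (r 0), vec (r 1)] := by
    intro r
    rw [F.toMultilinearMap.map_smul_univ (fun i => c (r i)) (fun i => vec (r i))]
    have : (fun i : Fin 2 => vec (r i)) = ![vec (r 0), vec (r 1)] := by
      funext i; fin_cases i <;> rfl
    rw [this, Fin.prod_univ_two]
    simp [smul_eq_mul, mul_assoc]
  calc ∑ r : Fin 2 → Fin n × Bool, F.toMultilinearMap (fun i => c (r i) • vec (r i))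
      = ∑ r : Fin 2 → Fin n × Bool, c (r 0) * c (r 1) * F ![vec (r 0), vec (r 1)] := by
        exact Finset.sum_congr rfl fun r _ => h2 r
    _ = ∑ p : (Fin n × Bool) × (Fin n × Bool), c p.1 * c p.2 * F ![vec p.1, vec p.2] := by
        apply Fintype.sum_equiv (finTwoArrowEquiv _)
        intro r
        simp [finTwoArrowEquiv]
    _ = _ := Fintype.sum_prod_type _

set_option maxHeartbeats 2000000 in
lemma re_quadform_complexHessian (g : EuclideanSpace ℂ (Fin n) → ℝ)
    (z : EuclideanSpace ℂ (Fin n)) (x : Fin n → ℂ) :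
    (star x ⬝ᵥ (complexHessian g z) *ᵥ x).re
      = (iteratedFDeriv ℝ 2 g z
          ![∑ α, x α • EuclideanSpace.single α 1, ∑ α, x α • EuclideanSpace.single α 1]
        + iteratedFDeriv ℝ 2 g z
          ![Complex.I • ∑ α, x α • EuclideanSpace.single α 1,
            Complex.I • ∑ α, x α • EuclideanSpace.single α 1]) / 4 := by
  classical
  set F := iteratedFDeriv ℝ 2 g z with hF
  set vec : Fin n × Bool → EuclideanSpace ℂ (Fin n) :=
    fun j => if j.2 then Complex.I • EuclideanSpace.single j.1 1
      else EuclideanSpace.single j.1 1 with hvec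
  set cx : Fin n × Bool → ℝ := fun j => if j.2 then (x j.1).im else (x j.1).re with hcx
  set cIx : Fin n × Bool → ℝ := fun j => if j.2 then (x j.1).re else -(x j.1).im with hcIx
  have decomp : ∀ (w : ℂ) (e : EuclideanSpace ℂ (Fin n)),
      w • e = w.re • e + w.im • (Complex.I • e) := by
    intro w e
    rw [← Complex.coe_smul, ← Complex.coe_smul, smul_smul]
    rw [← add_smul]
    congr 1
    simp [Complex.ext_iff]
  have hξ : (∑ α, x α • EuclideanSpace.single α 1 : EuclideanSpace ℂ (Fin n))
      = ∑ j, cx j • vec j := by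
    rw [Fintype.sum_prod_type]
    apply Finset.sum_congr rfl
    intro α _
    rw [Fintype.sum_bool]
    simp only [hcx, hvec, if_true, if_false]
    rw [decomp (x α)]
    abel
    exact add_comm _ _
  have hIξ : (Complex.I • ∑ α, x α • EuclideanSpace.single α 1 : EuclideanSpace ℂ (Fin n))
      = ∑ j, cIx j • vec j := by
    rw [Finset.smul_sum, Fintype.sum_prod_type]
    apply Finset.sum_congr rfl
    intro α _
    rw [Fintype.sum_bool]
    simp only [hcIx, hvec, if_true, if_false]
    rw [smul_smul, decomp (Complex.I * x α)]
    simp only [Complex.mul_re, Complex.mul_im, Complex.I_re, Complex.I_im]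
    ring_nf
    abel
    exact add_comm _ _
  rw [hIξ, hξ, multilinear_expand, multilinear_expand]
  -- expand the left-hand side
  have hlhs : (star x ⬝ᵥ (complexHessian g z) *ᵥ x).re
      = ∑ α, ∑ β, ((starRingEnd ℂ) (x α) * (complexHessian g z α β * x β)).re := by
    simp only [dotProduct, Matrix.mulVec, Pi.star_apply, RCLike.star_def, Finset.mul_sum]
    rw [Complex.re_sum]
    apply Finset.sum_congr rfl
    intro α _
    rw [Complex.re_sum]
  rw [hlhs]
  have key : ∀ (ax bx : (Fin n × Bool) → (Fin n × Bool) → ℝ),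
      (∑ j0, ∑ j1, ax j0 j1 + ∑ j0, ∑ j1, bx j0 j1) / 4
        = ∑ α, ∑ β, ∑ b0, ∑ b1, (ax (α, b0) (β, b1) + bx (α, b0) (β, b1)) / 4 := by
    intro ax bx
    rw [← Finset.sum_add_distrib, Finset.sum_div, Fintype.sum_prod_type]
    apply Finset.sum_congr rfl
    intro α _
    have h3 : ∀ b0, (∑ j1, ax (α, b0) j1 + ∑ j1, bx (α, b0) j1) / 4
        = ∑ β, ∑ b1, (ax (α, b0) (β, b1) + bx (α, b0) (β, b1)) / 4 := by
      intro b0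
      rw [← Finset.sum_add_distrib, Finset.sum_div, Fintype.sum_prod_type]
    rw [Finset.sum_congr rfl (fun b0 _ => h3 b0), Finset.sum_comm]
  rw [key]
  apply Finset.sum_congr rfl
  intro α _
  apply Finset.sum_congr rfl
  intro β _
  simp only [Fintype.sum_bool]
  simp only [hcx, hcIx, hvec, complexHessian]
  norm_num
  simp only [hF]
  ring

/-- derivative at a point which is a max from the left is nonneg -/
lemma deriv_nonneg_of_left_max {h : ℝ → ℝ} {t0 c : ℝ} (hd : HasDerivAt h c t0)
    (hmax : ∀ᶠ s in nhdsWithin t0 (Set.Iio t0), h s ≤ h t0) : 0 ≤ c := by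
  have hslope := hasDerivAt_iff_tendsto_slope.mp hd
  have h2 : Filter.Tendsto (slope h t0) (nhdsWithin t0 (Set.Iio t0)) (nhds c) :=
    hslope.mono_left (nhdsWithin_mono _ (fun x hx => ne_of_lt hx))
  refine ge_of_tendsto h2 ?_
  filter_upwards [hmax, self_mem_nhdsWithin] with s hs hs'
  have hlt : s < t0 := hs'
  rw [slope_def_field, div_nonneg_iff]
  right
  exact ⟨by linarith, by linarith⟩

/-- Second derivative test: at an interior minimum, the quadratic form of the second
derivative is nonnegative along each direction. -/
lemma second_deriv_test {E : Type*} [NormedAddCommGroup E] [NormedSpace ℝ E]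
    {g : E → ℝ} {s : Set E} (hs : IsOpen s) {z : E} (hz : z ∈ s)
    (hg : ContDiffOn ℝ (⊤ : ℕ∞) g s) (hmin : ∀ y ∈ s, g z ≤ g y) (w : E) :
    0 ≤ iteratedFDeriv ℝ 2 g z ![w, w] := by
  have hg' : ContDiffOn ℝ ((⊤ : ℕ∞) : WithTop ℕ∞) g s := hg.of_le (by simp)
  rw [iteratedFDeriv_two_apply]
  simp only [Matrix.cons_val_zero, Matrix.cons_val_one, Matrix.head_cons]
  set K := fderiv ℝ (fderiv ℝ g) z w w with hK
  by_contra hneg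
  push_neg at hneg
  set c : ℝ → E := fun r => z + r • w with hc
  have hcd : ∀ r : ℝ, HasDerivAt c w r := by
    intro r
    have h := ((hasDerivAt_id r).smul_const w).const_add z
    rw [one_smul] at h
    exact h
  have hc0 : c 0 = z := by simp [hc]
  have hcont : Continuous c := continuous_const.add (continuous_id.smul continuous_const)
  have hopen : IsOpen (c ⁻¹' s) := hs.preimage hcont
  have h0mem : (0:ℝ) ∈ c ⁻¹' s := by simp [hc0, hz]
  obtain ⟨ε, hε, hball⟩ := Metric.isOpen_iff.mp hopen 0 h0mem
  have hmem : ∀ r : ℝ, |r| < ε → c r ∈ s := by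
    intro r hr
    apply hball
    simpa [Real.dist_eq] using hr
  have hgd : DifferentiableOn ℝ g s := hg'.differentiableOn (by simp)
  have hfd : ContDiffOn ℝ ((⊤ : ℕ∞) : WithTop ℕ∞) (fderiv ℝ g) s :=
    ((contDiffOn_infty_iff_fderiv_of_isOpen hs).mp hg').2
  have hfd' : DifferentiableAt ℝ (fderiv ℝ g) z :=
    (hfd.differentiableOn (by simp)).differentiableAt (hs.mem_nhds hz)
  set φ : ℝ → ℝ := fun r => fderiv ℝ g (c r) w with hφ
  have hφd : ∀ r : ℝ, |r| < ε → HasDerivAt (fun r => g (c r)) (φ r) r := by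
    intro r hr
    exact ((hgd.differentiableAt (hs.mem_nhds (hmem r hr))).hasFDerivAt).comp_hasDerivAt r (hcd r)
  have hφ0 : HasDerivAt φ K 0 := by
    have h1' : HasFDerivAt (fderiv ℝ g) (fderiv ℝ (fderiv ℝ g) z) (c 0) := by
      rw [hc0]; exact hfd'.hasFDerivAt
    have h1 := h1'.comp_hasDerivAt 0 (hcd 0)
    have h2 := h1.clm_apply (hasDerivAt_const (0:ℝ) w)
    simpa [hK] using h2
  have hmin0 : IsLocalMin (fun r => g (c r)) 0 := by
    have hev : ∀ᶠ r in nhds (0:ℝ), g (c 0) ≤ g (c r) := by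
      filter_upwards [Metric.ball_mem_nhds (0:ℝ) hε] with r hr
      rw [hc0]
      exact hmin _ (hmem r (by simpa [Real.dist_eq] using hr))
    exact hev.mono (fun r h => h)
  have hφzero : φ 0 = 0 := hmin0.hasDerivAt_eq_zero (hφd 0 (by simpa using hε))
  have hslope := hasDerivAt_iff_tendsto_slope.mp hφ0
  have hev : ∀ᶠ r in nhdsWithin (0:ℝ) (Set.Ioi 0), slope φ 0 r < 0 := by
    have h5 : Set.Iio (0:ℝ) ∈ nhds K := Iio_mem_nhds hneg
    exact (hslope.mono_left (nhdsWithin_mono _ (fun x hx => ne_of_gt hx))).eventually_mem h5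
  rw [eventually_nhdsWithin_iff, Metric.eventually_nhds_iff] at hev
  obtain ⟨δ, hδ, hδev⟩ := hev
  set m := min (min δ ε) 1 / 2 with hm
  have hm0 : 0 < m := by positivity
  have hmδ : m < δ := by
    have h6 : min (min δ ε) 1 ≤ δ := le_trans (min_le_left _ _) (min_le_left _ _)
    rw [hm]; linarith
  have hmε : m < ε := by
    have h6 : min (min δ ε) 1 ≤ ε := le_trans (min_le_left _ _) (min_le_right _ _)
    rw [hm]; linarith
  have hφneg : ∀ r ∈ Set.Ioo (0:ℝ) m, φ r < 0 := by
    intro r hr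
    have h4 : slope φ 0 r < 0 := by
      apply hδev
      · rw [Real.dist_eq, sub_zero, _root_.abs_of_pos hr.1]; linarith [hr.2]
      · exact hr.1
    rw [slope_def_field, hφzero] at h4
    have h7 : (φ r - 0) / (r - 0) < 0 := by simpa using h4
    by_contra hc'
    push_neg at hc'
    have : 0 ≤ (φ r - 0) / (r - 0) := div_nonneg (by linarith) (by linarith [hr.1])
    linarith
  have habs : ∀ r ∈ Set.Icc (0:ℝ) m, |r| < ε := by
    intro r hr
    rw [_root_.abs_of_nonneg hr.1]
    linarith [hr.2]
  have hconts : ContinuousOn (fun r => g (c r)) (Set.Icc 0 m) :=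
    fun r hr => ((hφd r (habs r hr)).continuousAt).continuousWithinAt
  have hanti : StrictAntiOn (fun r => g (c r)) (Set.Icc 0 m) := by
    apply strictAntiOn_of_deriv_neg (convex_Icc 0 m) hconts
    intro r hr
    rw [interior_Icc] at hr
    rw [(hφd r (habs r ⟨hr.1.le, hr.2.le⟩)).deriv]
    exact hφneg r hr
  have hlt : g (c m) < g (c 0) :=
    hanti (Set.left_mem_Icc.mpr hm0.le) (Set.right_mem_Icc.mpr hm0.le) hm0
  rw [hc0] at hlt
  have hcm : c m ∈ s := hmem m (by rw [_root_.abs_of_pos hm0]; exact hmε)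
  exact absurd (hmin _ hcm) (not_le.mpr hlt)

lemma hou_li_le
    (n : ℕ) (Ω : Set (EuclideanSpace ℂ (Fin n)))
    (hΩ_open : IsOpen Ω) (hΩ_ne : Ω.Nonempty)
    (hΩ_bdd : Bornology.IsBounded Ω)
    (T : ℝ) (hT : 0 < T)
    (f : ℝ → EuclideanSpace ℂ (Fin n) → ℝ → ℝ)
    (hf_mono : ∀ t ∈ Set.Ico 0 T, ∀ z ∈ closure Ω, ∀ x y : ℝ, x ≤ y →
      f t z y ≤ f t z x)
    (u v : EuclideanSpace ℂ (Fin n) × ℝ → ℝ)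
    (hu_smooth : ContDiffOn ℝ (⊤ : ℕ∞) u (Ω ×ˢ Set.Ioo 0 T))
    (hu_cont : ContinuousOn u (closure Ω ×ˢ Set.Ico 0 T))
    (hv_smooth : ContDiffOn ℝ (⊤ : ℕ∞) v (Ω ×ˢ Set.Ioo 0 T))
    (hv_cont : ContinuousOn v (closure Ω ×ˢ Set.Ico 0 T))
    (hu_psh : ∀ t ∈ Set.Ioo 0 T, ∀ z ∈ Ω,
      (complexHessian (fun w => u (w, t)) z).PosDef)
    (hv_psh : ∀ t ∈ Set.Ioo 0 T, ∀ z ∈ Ω,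
      (complexHessian (fun w => v (w, t)) z).PosDef)
    (hu_eq : ∀ z ∈ Ω, ∀ t ∈ Set.Ioo 0 T,
      deriv (fun s => u (z, s)) t =
        Real.log ((complexHessian (fun w => u (w, t)) z).det.re)
          + f t z (u (z, t)))
    (hv_eq : ∀ z ∈ Ω, ∀ t ∈ Set.Ioo 0 T,
      deriv (fun s => v (z, s)) t =
        Real.log ((complexHessian (fun w => v (w, t)) z).det.re)
          + f t z (v (z, t)))
    (h_bdry : ∀ z ∈ frontier Ω, ∀ t ∈ Set.Ioo 0 T, u (z, t) = v (z, t))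
    (h_init : ∀ z ∈ closure Ω, u (z, 0) = v (z, 0)) :
    ∀ z ∈ closure Ω, ∀ t ∈ Set.Ico 0 T, u (z, t) ≤ v (z, t) := by
  -- main claim: for every ε > 0 and τ ∈ (0,T), u - v - ε t ≤ 0 on closure Ω × [0,τ]
  have main : ∀ ε > 0, ∀ τ ∈ Set.Ioo 0 T, ∀ z ∈ closure Ω, ∀ t ∈ Set.Icc 0 τ,
      u (z, t) - v (z, t) - ε * t ≤ 0 := by
    intro ε hε τ hτ
    set K : Set (EuclideanSpace ℂ (Fin n) × ℝ) := closure Ω ×ˢ Set.Icc 0 τ with hK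
    set φ : EuclideanSpace ℂ (Fin n) × ℝ → ℝ := fun p => u p - v p - ε * p.2 with hφ
    have hKsub : K ⊆ closure Ω ×ˢ Set.Ico 0 T := by
      apply Set.prod_mono_right
      intro t ht
      exact ⟨ht.1, lt_of_le_of_lt ht.2 hτ.2⟩
    have hφcont : ContinuousOn φ K := by
      apply ContinuousOn.sub
      · exact (hu_cont.mono hKsub).sub (hv_cont.mono hKsub)
      · exact (continuous_const.mul (continuous_snd)).continuousOn
    have hKcompact : IsCompact K := by
      apply IsCompact.prod
      · exact Metric.isCompact_of_isClosed_isBounded isClosed_closure hΩ_bdd.closure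
      · exact isCompact_Icc
    have hKne : K.Nonempty := by
      obtain ⟨z, hz⟩ := hΩ_ne
      exact ⟨(z, 0), subset_closure hz, le_refl 0, hτ.1.le⟩
    obtain ⟨p0, hp0K, hp0max⟩ := hKcompact.exists_isMaxOn hKne hφcont
    rw [isMaxOn_iff] at hp0max
    -- it suffices to show φ p0 ≤ 0
    suffices hsuff : φ p0 ≤ 0 by
      intro z hz t ht
      exact le_trans (hp0max (z, t) ⟨hz, ht⟩) hsuff
    by_contra hpos
    push_neg at hpos
    obtain ⟨z0, t0⟩ := p0
    have hpos' : 0 < u (z0, t0) - v (z0, t0) - ε * t0 := hpos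
    have hz0cl : z0 ∈ closure Ω := hp0K.1
    have ht0cc : t0 ∈ Set.Icc 0 τ := hp0K.2
    -- t0 ≠ 0
    have ht0ne : t0 ≠ 0 := by
      intro h0
      have h1 := h_init z0 hz0cl
      rw [h0] at hpos'
      rw [h1] at hpos'
      simp at hpos'
    have ht0pos : 0 < t0 := lt_of_le_of_ne ht0cc.1 (Ne.symm ht0ne)
    have ht0T : t0 ∈ Set.Ioo 0 T := ⟨ht0pos, lt_of_le_of_lt ht0cc.2 hτ.2⟩
    -- z0 ∉ frontier Ω
    have hz0Ω : z0 ∈ Ω := by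
      by_contra hzf
      have hfr : z0 ∈ frontier Ω := by
        rw [frontier, hΩ_open.interior_eq]
        exact ⟨hz0cl, hzf⟩
      have h1 := h_bdry z0 hfr t0 ht0T
      rw [h1] at hpos'
      nlinarith [mul_pos hε ht0pos]
    -- interior point in space-time
    have hp0int : (z0, t0) ∈ Ω ×ˢ Set.Ioo 0 T := ⟨hz0Ω, ht0T⟩
    have hopen : IsOpen (Ω ×ˢ Set.Ioo 0 T) := hΩ_open.prod isOpen_Ioo
    -- (a) time derivative inequality
    have hud : DifferentiableAt ℝ (fun s => u (z0, s)) t0 := by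
      have h1 : DifferentiableAt ℝ u (z0, t0) :=
        ((hu_smooth.contDiffAt (hopen.mem_nhds hp0int)).differentiableAt (by simp))
      exact h1.comp t0 ((differentiableAt_const z0).prodMk differentiableAt_id)
    have hvd : DifferentiableAt ℝ (fun s => v (z0, s)) t0 := by
      have h1 : DifferentiableAt ℝ v (z0, t0) :=
        ((hv_smooth.contDiffAt (hopen.mem_nhds hp0int)).differentiableAt (by simp))
      exact h1.comp t0 ((differentiableAt_const z0).prodMk differentiableAt_id)
    set du := deriv (fun s => u (z0, s)) t0 with hdu
    set dv := deriv (fun s => v (z0, s)) t0 with hdv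
    have hh : HasDerivAt (fun s => u (z0, s) - v (z0, s) - ε * s) (du - dv - ε) t0 := by
      have := (hud.hasDerivAt.sub hvd.hasDerivAt).sub ((hasDerivAt_id t0).const_mul ε)
      rw [mul_one] at this
      exact this
    have hderiv_ge : ε ≤ du - dv := by
      have h2 : 0 ≤ du - dv - ε := by
        apply deriv_nonneg_of_left_max hh
        have hmem : Set.Ioo 0 t0 ∈ nhdsWithin t0 (Set.Iio t0) :=
          Ioo_mem_nhdsLT_of_mem ⟨ht0pos, le_refl t0⟩
        filter_upwards [hmem] with s hs
        have hsK : (z0, s) ∈ K := ⟨hz0cl, hs.1.le, le_trans hs.2.le ht0cc.2⟩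
        exact hp0max (z0, s) hsK
      linarith
    -- (b) f monotonicity
    have huv : v (z0, t0) ≤ u (z0, t0) := by
      nlinarith [mul_pos hε ht0pos]
    have hf_le : f t0 z0 (u (z0, t0)) ≤ f t0 z0 (v (z0, t0)) :=
      hf_mono t0 ⟨ht0pos.le, ht0T.2⟩ z0 hz0cl _ _ huv
    -- matrices
    set Hu := complexHessian (fun w => u (w, t0)) z0 with hHu
    set Hv := complexHessian (fun w => v (w, t0)) z0 with hHv
    have hHuPD : Hu.PosDef := hu_psh t0 ht0T z0 hz0Ω
    have hHvPD : Hv.PosDef := hv_psh t0 ht0T z0 hz0Ω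
    -- (c) the spatial maximum: Hv - Hu is PSD
    -- slices are smooth on Ω
    have hslice : ∀ w : EuclideanSpace ℂ (Fin n), ContDiff ℝ (⊤ : ℕ∞)
        (fun y : EuclideanSpace ℂ (Fin n) => (y, t0)) := fun w => contDiff_id.prodMk contDiff_const
    have hmapsto : Set.MapsTo (fun y : EuclideanSpace ℂ (Fin n) => (y, t0)) Ω (Ω ×ˢ Set.Ioo 0 T) :=
      fun y hy => ⟨hy, ht0T⟩
    have huslice : ContDiffOn ℝ (⊤ : ℕ∞) (fun y => u (y, t0)) Ω :=
      hu_smooth.comp ((hslice 0).contDiffOn) hmapsto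
    have hvslice : ContDiffOn ℝ (⊤ : ℕ∞) (fun y => v (y, t0)) Ω :=
      hv_smooth.comp ((hslice 0).contDiffOn) hmapsto
    set g : EuclideanSpace ℂ (Fin n) → ℝ := (fun y => v (y, t0)) - (fun y => u (y, t0)) with hg
    have hgsmooth : ContDiffOn ℝ (⊤ : ℕ∞) g Ω := hvslice.sub huslice
    have hgmin : ∀ y ∈ Ω, g z0 ≤ g y := by
      intro y hy
      have hyK : (y, t0) ∈ K := ⟨subset_closure hy, ht0cc⟩
      have h2 : u (y, t0) - v (y, t0) - ε * t0 ≤ u (z0, t0) - v (z0, t0) - ε * t0 :=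
        hp0max (y, t0) hyK
      simp only [hg, Pi.sub_apply]
      linarith
    have hgtest : ∀ w : EuclideanSpace ℂ (Fin n), 0 ≤ iteratedFDeriv ℝ 2 g z0 ![w, w] :=
      fun w => second_deriv_test hΩ_open hz0Ω hgsmooth hgmin w
    -- split iterated derivative of g
    have huCA : ContDiffAt ℝ 2 (fun y => u (y, t0)) z0 :=
      (huslice.contDiffAt (hΩ_open.mem_nhds hz0Ω)).of_le (WithTop.coe_le_coe.mpr le_top)
    have hvCA : ContDiffAt ℝ 2 (fun y => v (y, t0)) z0 :=
      (hvslice.contDiffAt (hΩ_open.mem_nhds hz0Ω)).of_le (WithTop.coe_le_coe.mpr le_top)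
    have hsplit : ∀ w : EuclideanSpace ℂ (Fin n),
        iteratedFDeriv ℝ 2 g z0 ![w, w]
          = iteratedFDeriv ℝ 2 (fun y => v (y, t0)) z0 ![w, w]
            - iteratedFDeriv ℝ 2 (fun y => u (y, t0)) z0 ![w, w] := by
      intro w
      have hUD : UniqueDiffOn ℝ Ω := hΩ_open.uniqueDiffOn
      have hv2 : ContDiffOn ℝ 2 (fun y => v (y, t0)) Ω := hvslice.of_le (WithTop.coe_le_coe.mpr le_top)
      have hu2 : ContDiffOn ℝ 2 (-(fun y => u (y, t0))) Ω := (huslice.of_le (WithTop.coe_le_coe.mpr le_top)).neg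
      have e1 : iteratedFDeriv ℝ 2 g z0 ![w, w]
          = iteratedFDerivWithin ℝ 2 g Ω z0 ![w, w] := by
        rw [iteratedFDerivWithin_of_isOpen 2 hΩ_open hz0Ω]
      have e2 : g = (fun y => v (y, t0)) + (-(fun y => u (y, t0))) := by
        funext y; simp [hg, sub_eq_add_neg]
      rw [e1, e2, iteratedFDerivWithin_add_apply (hv2 z0 hz0Ω) (hu2 z0 hz0Ω) hUD hz0Ω,
        iteratedFDerivWithin_neg_apply hUD hz0Ω,
        iteratedFDerivWithin_of_isOpen 2 hΩ_open hz0Ω,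
        iteratedFDerivWithin_of_isOpen 2 hΩ_open hz0Ω]
      simp [sub_eq_add_neg]
    have hPSD : (Hv - Hu).PosSemidef := by
      refine Matrix.PosSemidef.of_dotProduct_mulVec_nonneg ?_ ?_
      · exact hHvPD.1.sub hHuPD.1
      · intro x
        have hqsub : star x ⬝ᵥ (Hv - Hu) *ᵥ x
            = star x ⬝ᵥ Hv *ᵥ x - star x ⬝ᵥ Hu *ᵥ x := by
          rw [Matrix.sub_mulVec, dotProduct_sub]
        rw [hqsub]
        by_cases hx : x = 0
        · simp [hx]
        · have hqu := hHuPD.dotProduct_mulVec_pos hx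
          have hqv := hHvPD.dotProduct_mulVec_pos hx
          rw [Complex.lt_def] at hqu hqv
          rw [Complex.le_def]
          constructor
          · rw [Complex.sub_re, Complex.zero_re]
            rw [hHu, hHv, re_quadform_complexHessian, re_quadform_complexHessian]
            have h1 := hgtest (∑ α, x α • EuclideanSpace.single α 1)
            have h2 := hgtest (Complex.I • ∑ α, x α • EuclideanSpace.single α 1)
            rw [hsplit] at h1 h2
            linarith
          · rw [Complex.sub_im, Complex.zero_im, ← hqu.2, ← hqv.2]
            simp
    -- determinant comparison
    have hdet : Hu.det.re ≤ Hv.det.re := det_re_mono hHuPD hPSD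
    have hlogle : Real.log Hu.det.re ≤ Real.log Hv.det.re := by
      apply Real.log_le_log _ hdet
      have := hHuPD.det_pos
      rw [Complex.lt_def] at this
      exact this.1
    -- contradiction
    have heu := hu_eq z0 hz0Ω t0 ht0T
    have hev := hv_eq z0 hz0Ω t0 ht0T
    rw [← hdu] at heu
    rw [← hdv] at hev
    rw [← hHu] at heu
    rw [← hHv] at hev
    have : du - dv ≤ 0 := by
      rw [heu, hev]
      have := hf_le
      linarith
    linarith
  -- conclude
  intro z hz t ht
  rcases eq_or_lt_of_le ht.1 with h0 | htpos
  · rw [← h0]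
    exact le_of_eq (h_init z hz)
  · have hτ : t ∈ Set.Ioo 0 T := ⟨htpos, ht.2⟩
    have hbound : ∀ ε > 0, u (z, t) ≤ v (z, t) + ε := by
      intro ε hε
      have := main (ε / t) (by positivity) t hτ z hz t ⟨ht.1, le_refl t⟩
      have ht' : ε / t * t = ε := div_mul_cancel₀ ε (ne_of_gt htpos)
      linarith
    exact le_of_forall_pos_le_add hbound


/-- Uniqueness in the Hou–Li theorem: two solutions of
`ẇ = log det(w_{αβ̄}) + f(t,z,w)` (with `f` non-increasing in its last
variable) which agree on `∂Ω × (0,T)` and at `t = 0` agree everywhere. -/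
theorem hou_li_uniqueness
    (n : ℕ) (Ω : Set (EuclideanSpace ℂ (Fin n)))
    (hΩ_open : IsOpen Ω) (hΩ_conn : IsConnected Ω)
    (hΩ_bdd : Bornology.IsBounded Ω)
    (T : ℝ) (hT : 0 < T)
    (f : ℝ → EuclideanSpace ℂ (Fin n) → ℝ → ℝ)
    (hf_cont : ContinuousOn (fun p : ℝ × EuclideanSpace ℂ (Fin n) × ℝ =>
      f p.1 p.2.1 p.2.2) (Set.Ico 0 T ×ˢ closure Ω ×ˢ (Set.univ : Set ℝ)))
    (hf_mono : ∀ t ∈ Set.Ico 0 T, ∀ z ∈ closure Ω, ∀ x y : ℝ, x ≤ y →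
      f t z y ≤ f t z x)
    (u v : EuclideanSpace ℂ (Fin n) × ℝ → ℝ)
    (hu_smooth : ContDiffOn ℝ (⊤ : ℕ∞) u (Ω ×ˢ Set.Ioo 0 T))
    (hu_cont : ContinuousOn u (closure Ω ×ˢ Set.Ico 0 T))
    (hv_smooth : ContDiffOn ℝ (⊤ : ℕ∞) v (Ω ×ˢ Set.Ioo 0 T))
    (hv_cont : ContinuousOn v (closure Ω ×ˢ Set.Ico 0 T))
    (hu_psh : ∀ t ∈ Set.Ioo 0 T, ∀ z ∈ Ω,
      (complexHessian (fun w => u (w, t)) z).PosDef)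
    (hv_psh : ∀ t ∈ Set.Ioo 0 T, ∀ z ∈ Ω,
      (complexHessian (fun w => v (w, t)) z).PosDef)
    (hu_eq : ∀ z ∈ Ω, ∀ t ∈ Set.Ioo 0 T,
      deriv (fun s => u (z, s)) t =
        Real.log ((complexHessian (fun w => u (w, t)) z).det.re)
          + f t z (u (z, t)))
    (hv_eq : ∀ z ∈ Ω, ∀ t ∈ Set.Ioo 0 T,
      deriv (fun s => v (z, s)) t =
        Real.log ((complexHessian (fun w => v (w, t)) z).det.re)
          + f t z (v (z, t)))
    (h_bdry : ∀ z ∈ frontier Ω, ∀ t ∈ Set.Ioo 0 T, u (z, t) = v (z, t))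
    (h_init : ∀ z ∈ closure Ω, u (z, 0) = v (z, 0)) :
    ∀ z ∈ closure Ω, ∀ t ∈ Set.Ico 0 T, u (z, t) = v (z, t) := by
  intro z hz t ht
  have h1 := hou_li_le n Ω hΩ_open hΩ_conn.nonempty hΩ_bdd T hT f hf_mono u v
    hu_smooth hu_cont hv_smooth hv_cont hu_psh hv_psh hu_eq hv_eq h_bdry h_init z hz t ht
  have h2 := hou_li_le n Ω hΩ_open hΩ_conn.nonempty hΩ_bdd T hT f hf_mono v u
    hv_smooth hv_cont hu_smooth hu_cont hv_psh hu_psh hv_eq hu_eq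
    (fun z hz t ht => (h_bdry z hz t ht).symm)
    (fun z hz => (h_init z hz).symm) z hz t ht
  linarith
end quadform
end
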